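/- arXiv:2411.16525 — 9 statements merged into one kernel-verified Lean document; each statement's English description precedes it below -/
import Mathlib

section
/- Let n ≥ 2, z ∈ ℝ^n, p = softmax(z), and i ∈ {1,…,n}. If max_{j∈[n]} z_j − z_i > ln n + 1, then the partial derivative of Boltz at z in the i-th coordinate (i.e. the derivative at t = z_i of t ↦ Boltz(z_1,…,z_{i−1}, t, z_{i+1},…,z_n)) equals p_i(1 + ln p_i + S(p)) and is strictly negative. -/
/-!
With `p = softmax z` and `E = ∑ⱼ exp zⱼ` one has `log pᵢ = zᵢ - log E` and
`S(p) = log E - Boltz z`, so the claimed derivative is `pᵢ (1 + zᵢ - Boltz z)`, which is what the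
quotient rule gives for `Boltz z = (∑ⱼ zⱼ exp zⱼ) / E`. Jensen's inequality for the concave
`x ↦ -x log x` gives `S(p) ≤ log n`, hence `Boltz z ≥ log E - log n ≥ max z - log n > zᵢ + 1`,
and the derivative is negative.
-/

/-- The softmax of a vector `z ∈ ℝⁿ`: `softmax(z)_i = exp(z_i) / ∑_j exp(z_j)`. -/
noncomputable def softmaxVec {n : ℕ} (z : Fin n → ℝ) : Fin n → ℝ :=
  fun i => Real.exp (z i) / ∑ j, Real.exp (z j)

/-- The Boltzmann operator `Boltz(z) = ∑_i z_i · softmax(z)_i`. -/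
noncomputable def boltz {n : ℕ} (z : Fin n → ℝ) : ℝ :=
  ∑ i, z i * softmaxVec z i

/-- The (Gibbs) entropy `S(p) = −∑_i p_i ln p_i`. -/
noncomputable def entropy {n : ℕ} (p : Fin n → ℝ) : ℝ :=
  -∑ i, p i * Real.log (p i)

open Finset Real

namespace Softmax

variable {n : ℕ}

theorem entropy_le_log_card {p : Fin n → ℝ} (hp : ∀ i, 0 ≤ p i) (hsum : ∑ i, p i = 1) :
    entropy p ≤ log n := by
  have hn : (0 : ℝ) < n := by
    rcases Nat.eq_zero_or_pos n with rfl | hn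
    · simp at hsum
    · exact_mod_cast hn
  have jensen := concaveOn_negMulLog.le_map_sum (t := univ) (w := fun _ => (n : ℝ)⁻¹) (p := p)
    (fun _ _ => by positivity) (by simp [hn.ne']) (fun i _ => hp i)
  simp only [smul_eq_mul, ← mul_sum, hsum, mul_one, negMulLog, log_inv, neg_mul_neg] at jensen
  have hent : entropy p = ∑ i, -p i * log (p i) := by simp [entropy]
  rwa [hent, ← mul_le_mul_iff_of_pos_left (inv_pos.2 hn)]

theorem sum_exp_pos (z : Fin n → ℝ) (i : Fin n) : 0 < ∑ j, exp (z j) :=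
  sum_pos (fun j _ => exp_pos (z j)) ⟨i, mem_univ i⟩

theorem softmaxVec_pos (z : Fin n → ℝ) (i : Fin n) : 0 < softmaxVec z i :=
  div_pos (exp_pos _) (sum_exp_pos z i)

theorem sum_softmaxVec [NeZero n] (z : Fin n → ℝ) : ∑ i, softmaxVec z i = 1 := by
  simp only [softmaxVec]
  rw [← sum_div, div_self (sum_exp_pos z 0).ne']

theorem log_softmaxVec (z : Fin n → ℝ) (i : Fin n) :
    log (softmaxVec z i) = z i - log (∑ j, exp (z j)) := by
  rw [softmaxVec, log_div (exp_pos _).ne' (sum_exp_pos z i).ne', log_exp]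

theorem entropy_softmaxVec [NeZero n] (z : Fin n → ℝ) :
    entropy (softmaxVec z) = log (∑ j, exp (z j)) - boltz z := by
  simp only [entropy, boltz, log_softmaxVec, mul_sub, sum_sub_distrib, ← sum_mul, sum_softmaxVec,
    one_mul]
  simp only [mul_comm (softmaxVec z _)]
  ring

theorem log_softmaxVec_add_entropy (z : Fin n → ℝ) (i : Fin n) :
    log (softmaxVec z i) + entropy (softmaxVec z) = z i - boltz z := by
  have : NeZero n := NeZero.of_pos i.pos
  rw [log_softmaxVec, entropy_softmaxVec]
  ring

theorem sub_log_card_le_boltz (z : Fin n → ℝ) (j : Fin n) : z j - log n ≤ boltz z := by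
  have : NeZero n := NeZero.of_pos j.pos
  have hz : z j ≤ log (∑ k, exp (z k)) :=
    (le_log_iff_exp_le (sum_exp_pos z j)).2 <|
      single_le_sum (fun k _ => (exp_pos (z k)).le) (mem_univ j)
  have hS := entropy_le_log_card (fun k => (softmaxVec_pos z k).le) (sum_softmaxVec z)
  rw [entropy_softmaxVec] at hS
  linarith

theorem boltz_eq_div (z : Fin n → ℝ) :
    boltz z = (∑ j, z j * exp (z j)) / ∑ j, exp (z j) := by
  simp only [boltz, softmaxVec, sum_div, mul_div_assoc]

theorem hasDerivAt_boltz_update (z : Fin n → ℝ) (i : Fin n) :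
    HasDerivAt (fun t => boltz (Function.update z i t)) (softmaxVec z i * (1 + z i - boltz z))
      (z i) := by
  have hu : ∀ j, HasDerivAt (fun t => Function.update z i t j) ((Pi.single i 1 : Fin n → ℝ) j)
      (z i) :=
    hasDerivAt_pi.1 (hasDerivAt_update z i (z i))
  have hnum : HasDerivAt (fun t => ∑ j, Function.update z i t j * exp (Function.update z i t j))
      ((1 + z i) * exp (z i)) (z i) := by
    refine (HasDerivAt.fun_sum (u := univ) fun j _ => (hu j).fun_mul (hu j).exp).congr_deriv ?_
    simp [Pi.single_apply, add_mul, sum_add_distrib]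
  have hden : HasDerivAt (fun t => ∑ j, exp (Function.update z i t j)) (exp (z i)) (z i) := by
    refine (HasDerivAt.fun_sum (u := univ) fun j _ => (hu j).exp).congr_deriv ?_
    simp [Pi.single_apply]
  have hE := (sum_exp_pos z i).ne'
  simp_rw [boltz_eq_div]
  refine (hnum.div hden (by simpa using hE)).congr_deriv ?_
  simp only [Function.update_eq_self, softmaxVec]
  field_simp

end Softmax

open Softmax in
theorem hasDerivAt_boltz_update_of_max_sub_gt_general {n : ℕ} (z : Fin n → ℝ) (i : Fin n)
    (hmax : ∃ j, (∀ k, z k ≤ z j) ∧ z j - z i > Real.log n + 1) :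
    HasDerivAt (fun t => boltz (Function.update z i t))
        (softmaxVec z i * (1 + Real.log (softmaxVec z i) + entropy (softmaxVec z))) (z i) ∧
      softmaxVec z i * (1 + Real.log (softmaxVec z i) + entropy (softmaxVec z)) < 0 := by
  obtain ⟨j, -, hgap⟩ := hmax
  have hval : softmaxVec z i * (1 + Real.log (softmaxVec z i) + entropy (softmaxVec z))
      = softmaxVec z i * (1 + z i - boltz z) := by
    rw [add_assoc, log_softmaxVec_add_entropy, add_sub_assoc]
  rw [hval]
  refine ⟨hasDerivAt_boltz_update z i, mul_neg_of_pos_of_neg (softmaxVec_pos z i) ?_⟩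
  linarith [sub_log_card_le_boltz z j]

/-- if `max_j z_j − z_i > ln n + 1`, then the partial derivative of `Boltz`
at `z` in the `i`-th coordinate equals `p_i (1 + ln p_i + S(p))` and is strictly negative. -/
theorem hasDerivAt_boltz_update_of_max_sub_gt {n : ℕ} (hn : 2 ≤ n) (z : Fin n → ℝ) (i : Fin n)
    (hmax : ∃ j, (∀ k, z k ≤ z j) ∧ z j - z i > Real.log n + 1) :
    HasDerivAt (fun t => boltz (Function.update z i t))
        (softmaxVec z i * (1 + Real.log (softmaxVec z i) + entropy (softmaxVec z))) (z i) ∧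
      softmaxVec z i * (1 + Real.log (softmaxVec z i) + entropy (softmaxVec z)) < 0 :=
  hasDerivAt_boltz_update_of_max_sub_gt_general z i hmax
end

section
/- Let n ≥ 2, z ∈ ℝ^n, and i ∈ {1,…,n}. If max_{j∈[n]} z_j − z_i > ln n + 3, then the second partial derivative of Boltz at z in the i-th coordinate (i.e. the second derivative at t = z_i of t ↦ Boltz(z_1,…,z_{i−1}, t, z_{i+1},…,z_n)) is strictly negative; in other words, Boltz is strictly concave in the direction of z_i at z. -/
/-!
Write `p(t)` for the softmax weight of coordinate `i` and `B(t)` for the Boltzmann operator as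
functions of `t = z_i`. Then `B' = p (1 + t - B)` and `p' = p (1 - p)`, so
`B'' = p ((1 - 2p)(1 + t - B) + 1)`, which is negative as soon as `p < 1/4` and `B - t > 3`.
Under the gap hypothesis `p ≤ exp (z_i - max z) < e⁻³`, and `B ≥ max z - log n` since the
Boltzmann operator is the log-sum-exp of `z` minus the entropy of the softmax distribution,
which is at most `log n`.
-/

open Real Finset Function

lemma Finset.sum_comp_update {ι α M : Type*} [Fintype ι] [DecidableEq ι] [AddCommMonoid M]
    (g : α → M) (z : ι → α) (i : ι) (t : α) :
    ∑ k, g (update z i t k) = g t + ∑ k ∈ univ.erase i, g (z k) := by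
  rw [← add_sum_erase _ _ (mem_univ i), update_self]
  congr 1
  exact sum_congr rfl fun k hk => by rw [update_of_ne (ne_of_mem_erase hk)]

lemma Real.exp_sub_exp_le_sub_mul_exp (s c : ℝ) : exp s - exp c ≤ (s - c) * exp s := by
  have h := add_one_le_exp (c - s)
  have hc : exp c = exp (c - s) * exp s := by rw [← exp_add, sub_add_cancel]
  nlinarith [exp_pos s]

variable {n : ℕ}

lemma boltz_eq_div (z : Fin n → ℝ) :
    boltz z = (∑ k, z k * exp (z k)) / ∑ k, exp (z k) := by
  simp only [boltz, softmaxVec, ← mul_div_assoc, sum_div]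

lemma softmaxVec_le_exp_sub (z : Fin n → ℝ) (i j : Fin n) :
    softmaxVec z i ≤ exp (z i - z j) := by
  rw [softmaxVec, exp_sub]
  exact div_le_div_of_nonneg_left (exp_pos _).le (exp_pos _)
    (single_le_sum (fun k _ => (exp_pos (z k)).le) (mem_univ j))

/-- Taking `c = z k - log n` in `∑ (z_m - c) exp z_m ≥ ∑ (exp z_m - exp c) = ∑ exp z_m - exp z_k`. -/
lemma sub_log_card_le_boltz (z : Fin n → ℝ) (k : Fin n) : z k - log n ≤ boltz z := by
  have hn : (0 : ℝ) < n := by exact_mod_cast k.pos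
  set c := z k - log n
  have hS : 0 < ∑ m, exp (z m) := sum_pos (fun m _ => exp_pos _) ⟨k, mem_univ k⟩
  have hc : (n : ℝ) * exp c = exp (z k) := by
    rw [exp_sub, exp_log hn]; field_simp
  have hsum : 0 ≤ ∑ m, (z m - c) * exp (z m) :=
    calc (0 : ℝ) ≤ ∑ m, exp (z m) - exp (z k) :=
          sub_nonneg.2 (single_le_sum (fun m _ => (exp_pos (z m)).le) (mem_univ k))
      _ = ∑ m, (exp (z m) - exp c) := by simp [sum_sub_distrib, hc]
      _ ≤ ∑ m, (z m - c) * exp (z m) :=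
          sum_le_sum fun m _ => exp_sub_exp_le_sub_mul_exp _ _
  rw [boltz_eq_div, le_div_iff₀ hS, mul_sum, ← sub_nonneg, ← sum_sub_distrib]
  simpa only [sub_mul] using hsum

section CoordinateLine

variable (z : Fin n → ℝ) (i : Fin n) (t : ℝ)

lemma softmaxVec_update_self :
    softmaxVec (update z i t) i = exp t / (exp t + ∑ k ∈ univ.erase i, exp (z k)) := by
  rw [softmaxVec, update_self, sum_comp_update]

lemma boltz_update :
    boltz (update z i t) = (t * exp t + ∑ k ∈ univ.erase i, z k * exp (z k)) /
      (exp t + ∑ k ∈ univ.erase i, exp (z k)) := by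
  rw [boltz_eq_div, sum_comp_update exp, sum_comp_update fun x => x * exp x]

lemma hasDerivAt_softmaxVec_update_self :
    HasDerivAt (fun s => softmaxVec (update z i s) i)
      (softmaxVec (update z i t) i * (1 - softmaxVec (update z i t) i)) t := by
  simp only [softmaxVec_update_self]
  have hD : 0 < exp t + ∑ k ∈ univ.erase i, exp (z k) := by positivity
  refine ((hasDerivAt_exp t).div ((hasDerivAt_exp t).add_const _) hD.ne').congr_deriv ?_
  field_simp

lemma hasDerivAt_boltz_update :
    HasDerivAt (fun s => boltz (update z i s))
      (softmaxVec (update z i t) i * (1 + t - boltz (update z i t))) t := by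
  simp only [softmaxVec_update_self, boltz_update]
  have hD : 0 < exp t + ∑ k ∈ univ.erase i, exp (z k) := by positivity
  have hN := ((hasDerivAt_id' t).mul (hasDerivAt_exp t)).add_const
    (∑ k ∈ univ.erase i, z k * exp (z k))
  refine (hN.div ((hasDerivAt_exp t).add_const _) hD.ne').congr_deriv ?_
  field_simp
  simp only [Pi.mul_apply]
  ring

lemma hasDerivAt_deriv_boltz_update :
    HasDerivAt (deriv fun s => boltz (update z i s))
      (softmaxVec (update z i t) i *
        ((1 - 2 * softmaxVec (update z i t) i) * (1 + t - boltz (update z i t)) + 1)) t := by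
  have hderiv : (deriv fun s => boltz (update z i s)) =
      fun s => softmaxVec (update z i s) i * (1 + s - boltz (update z i s)) :=
    funext fun s => (hasDerivAt_boltz_update z i s).deriv
  rw [hderiv]
  refine ((hasDerivAt_softmaxVec_update_self z i t).mul
    (((hasDerivAt_id' t).const_add 1).sub (hasDerivAt_boltz_update z i t))).congr_deriv ?_
  simp only [Pi.sub_apply]
  ring

end CoordinateLine

theorem deriv2_boltz_update_neg_of_max_sub_gt_general {n : ℕ} (z : Fin n → ℝ) (i : Fin n)
    (hmax : ∃ j, (∀ k, z k ≤ z j) ∧ z j - z i > Real.log n + 3) :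
    deriv (deriv (fun t => boltz (Function.update z i t))) (z i) < 0 := by
  obtain ⟨j, -, hgap⟩ := hmax
  have hlog := log_natCast_nonneg n
  have hB : z i + 3 < boltz z := by linarith [sub_log_card_le_boltz z j]
  have hp_pos : 0 < softmaxVec z i :=
    div_pos (exp_pos _) (sum_pos (fun k _ => exp_pos _) ⟨i, mem_univ i⟩)
  have hp_lt : softmaxVec z i < 1 / 4 :=
    calc softmaxVec z i ≤ exp (z i - z j) := softmaxVec_le_exp_sub z i j
      _ < exp (-3) := exp_lt_exp.2 (by linarith)
      _ < 1 / 4 := by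
        rw [exp_neg, one_div]
        exact inv_strictAnti₀ (by norm_num) (by linarith [add_one_lt_exp (x := 3) (by norm_num)])
  rw [(hasDerivAt_deriv_boltz_update z i (z i)).deriv, update_eq_self]
  exact mul_neg_of_pos_of_neg hp_pos (by nlinarith)

/-- if `max_j z_j − z_i > ln n + 3`, then the second partial derivative of
`Boltz` at `z` in the `i`-th coordinate is strictly negative. -/
theorem deriv2_boltz_update_neg_of_max_sub_gt {n : ℕ} (hn : 2 ≤ n) (z : Fin n → ℝ) (i : Fin n)
    (hmax : ∃ j, (∀ k, z k ≤ z j) ∧ z j - z i > Real.log n + 3) :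
    deriv (deriv (fun t => boltz (Function.update z i t))) (z i) < 0 :=
  deriv2_boltz_update_neg_of_max_sub_gt_general z i hmax
end

section
/- Let m > n ≥ 2 and δ > ln n + 1. Let z′ ∈ ℝ^m satisfy z′_i − z′_j > δ for all 1 ≤ i < j ≤ m, and let z = (z′_1, …, z′_n) ∈ ℝ^n consist of the first n entries of z′. Then Boltz(z) > Boltz(z′), where Boltz is computed in the respective dimensions. -/
/-!
`Boltz` is the mean of the entries under the weights `exp z_i`. Every entry dropped when
passing from `z'` to its first `n` entries lies strictly below every entry that is kept, and
removing strictly smaller values (with positive weight) from a weighted mean raises it.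
-/

open Finset Real

noncomputable def boltzOn {ι : Type*} (s : Finset ι) (z : ι → ℝ) : ℝ :=
  (∑ i ∈ s, z i * exp (z i)) / ∑ i ∈ s, exp (z i)

lemma boltz_eq_boltzOn_univ {n : ℕ} (z : Fin n → ℝ) : boltz z = boltzOn univ z := by
  simp only [boltz, boltzOn, softmaxVec, sum_div, mul_div_assoc]

lemma Fin.mem_map_castLEEmb_univ {n m : ℕ} (h : n ≤ m) (j : Fin m) :
    j ∈ univ.map (Fin.castLEEmb h) ↔ (j : ℕ) < n := by
  simp only [mem_map, mem_univ, true_and, Fin.castLEEmb_apply, Fin.ext_iff, Fin.val_castLE]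
  exact ⟨fun ⟨k, hk⟩ ↦ hk ▸ k.isLt, fun hj ↦ ⟨⟨j, hj⟩, rfl⟩⟩

lemma boltzOn_map {ι κ : Type*} (e : κ ↪ ι) (s : Finset κ) (z : ι → ℝ) :
    boltzOn (s.map e) z = boltzOn s (z ∘ e) := by
  simp only [boltzOn, sum_map, Function.comp_apply]

lemma add_div_add_lt_div_of_mul_lt {A B C D : ℝ} (hA : 0 < A) (hC : 0 < C)
    (h : D * A < B * C) : (B + D) / (A + C) < B / A := by
  rw [div_lt_div_iff₀ (by linarith) hA]
  nlinarith

lemma boltzOn_lt_of_lt_of_subset {ι : Type*} [DecidableEq ι] {s t : Finset ι} {z : ι → ℝ}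
    (hst : s ⊆ t) (hs : s.Nonempty) (hts : (t \ s).Nonempty)
    (hlt : ∀ i ∈ s, ∀ j ∈ t \ s, z j < z i) : boltzOn t z < boltzOn s z := by
  unfold boltzOn
  rw [← sum_sdiff hst, ← sum_sdiff hst, add_comm (∑ i ∈ t \ s, _), add_comm (∑ i ∈ t \ s, _)]
  refine add_div_add_lt_div_of_mul_lt (sum_pos (fun _ _ ↦ exp_pos _) hs)
    (sum_pos (fun _ _ ↦ exp_pos _) hts) ?_
  -- The difference of the two cross products is `∑ᵢ ∑ⱼ (z i - z j) exp (z i) exp (z j)`.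
  rw [← sub_pos, mul_comm (∑ i ∈ t \ s, _), sum_mul_sum, sum_mul_sum, ← sum_sub_distrib]
  refine sum_pos (fun i hi ↦ ?_) hs
  rw [← sum_sub_distrib]
  refine sum_pos (fun j hj ↦ ?_) hts
  have := mul_pos (mul_pos (sub_pos.2 (hlt i hi j hj)) (exp_pos (z i))) (exp_pos (z j))
  linarith

/-- let `m > n ≥ 2` and `δ > ln n + 1`.  If `z' ∈ ℝᵐ` has strictly decreasing
entries with gaps greater than `δ`, and `z ∈ ℝⁿ` consists of its first `n` entries, then
`Boltz(z) > Boltz(z')` (computed in the respective dimensions). -/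
theorem boltz_firstEntries_gt_boltz {n m : ℕ} (hn : 2 ≤ n) (hm : n < m)
    (δ : ℝ) (hδ : δ > Real.log n + 1)
    (z' : Fin m → ℝ) (hsep : ∀ i j : Fin m, i < j → z' i - z' j > δ) :
    boltz (fun i : Fin n => z' (Fin.castLE hm.le i)) > boltz z' := by
  have hδ0 : 0 < δ := by linarith [log_natCast_nonneg n]
  set s := univ.map (Fin.castLEEmb hm.le)
  have hfirst : boltz (fun i : Fin n => z' (Fin.castLE hm.le i)) = boltzOn s z' := by
    rw [boltzOn_map, boltz_eq_boltzOn_univ]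
    rfl
  rw [hfirst, boltz_eq_boltzOn_univ]
  have hs : s.Nonempty :=
    ⟨⟨0, by omega⟩, (Fin.mem_map_castLEEmb_univ _ _).2 (by show 0 < n; omega)⟩
  have hts : (univ \ s).Nonempty :=
    ⟨⟨n, hm⟩, mem_sdiff.2 ⟨mem_univ _, fun h ↦ ((Fin.mem_map_castLEEmb_univ _ _).1 h).false⟩⟩
  refine boltzOn_lt_of_lt_of_subset (subset_univ s) hs hts fun i hi j hj ↦ ?_
  have hij : i < j := by
    rw [Fin.mem_map_castLEEmb_univ] at hi
    rw [mem_sdiff, Fin.mem_map_castLEEmb_univ] at hj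
    exact Fin.lt_def.2 (by omega)
  linarith [hsep i j hij]
end

section
/- Let n ≥ 2 and δ ≥ 4 ln n. Let a, b ∈ ℝ^n satisfy: a_1 > a_2 > ⋯ > a_n and b_1 > b_2 > ⋯ > b_n; a_i − a_j > δ and b_i − b_j > δ for all 1 ≤ i < j ≤ n; |a_i − b_j| > δ for all i, j ∈ [n] with a_i ≠ b_j; (a_1,…,a_k) = (b_1,…,b_k) for some k ∈ [n−1]; and a_{k+1} > b_{k+1}. Then |Boltz(a) − Boltz(b)| > (ln n)² · e^{−(a_1 − b_{k+1})}. -/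
/-!
Both Boltzmann values are Gibbs averages with weights `exp (z i - a₁)`. Let `m` be the Gibbs mean
of the common block `(a₁, …, a_k) = (b₁, …, b_k)`; then `m - Boltz z` is the weighted sum of
`m - z_i` over the remaining entries divided by the partition function, so the common block
cancels from `Boltz b - Boltz a`. As all non-top entries lie `δ` below the top and
`n e^{-δ} ≤ 1/8`, `m` is within `δ/8` of the top and both partition functions lie in `[1, 9/8]`.
With `X = a₁ - a_{k+1}`, the term of `a` at `k+1` alone contributes at least `(7/9) X e^{-X}`,
while all remaining entries of `b` lie below `a_{k+1} - δ` and contribute at most `X e^{-X} / 4`.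
Hence `Boltz b - Boltz a ≥ X e^{-X} / 2`, which beats
`(ln n)² e^{-(a₁ - b_{k+1})} < (ln n)² e^{-δ} e^{-X}` because `X ≥ δ ≥ 4 ln n`.
-/

open Real Finset

lemma exp_neg_mul_le_exp_neg_mul {s t : ℝ} (hs : 1 ≤ s) (hst : s ≤ t) :
    exp (-t) * t ≤ exp (-s) * s := by
  have ht : t ≤ exp (t - s) * s := by
    nlinarith [add_one_le_exp (t - s), mul_nonneg (sub_nonneg.2 hs) (sub_nonneg.2 hst)]
  calc exp (-t) * t ≤ exp (-t) * (exp (t - s) * s) := by gcongr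
    _ = exp (-s) * s := by rw [← mul_assoc, ← exp_add]; ring_nf

lemma natCast_mul_exp_neg_le {n : ℕ} {δ : ℝ} (hn : 2 ≤ n) (hδ : 4 * log n ≤ δ) :
    (n : ℝ) * exp (-δ) ≤ 1 / 8 := by
  have hn' : (2 : ℝ) ≤ n := by exact_mod_cast hn
  have hexp : (n : ℝ) ^ 4 ≤ exp δ := by
    rw [← log_le_iff_le_exp (by positivity), log_pow]
    push_cast
    linarith
  have hcube : (2 : ℝ) ^ 3 ≤ n ^ 3 := pow_le_pow_left₀ (by norm_num) hn' 3
  rw [exp_neg, ← div_eq_mul_inv, div_le_iff₀ (exp_pos δ)]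
  nlinarith

lemma one_le_of_four_mul_log_le {n : ℕ} {δ : ℝ} (hn : 2 ≤ n) (hδ : 4 * log n ≤ δ) : 1 ≤ δ := by
  linarith [log_two_gt_d9, log_le_log two_pos (by exact_mod_cast hn : (2 : ℝ) ≤ n)]

lemma log_sq_mul_exp_neg_lt {n : ℕ} {δ X Y : ℝ} (hn : 2 ≤ n) (hδ : 4 * log n ≤ δ) (hX : δ ≤ X)
    (hY : X + δ < Y) : log n ^ 2 * exp (-Y) < X * exp (-X) / 2 := by
  have hL : 0 < log n := log_pos (by exact_mod_cast hn)
  have hLn : log n ≤ n := (log_le_sub_one_of_pos (by positivity)).trans (by linarith)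
  have hLδ : log n ^ 2 * exp (-δ) ≤ X / 2 := by
    nlinarith [mul_le_mul_of_nonneg_left (mul_le_mul_of_nonneg_right hLn (exp_pos (-δ)).le) hL.le,
      mul_le_mul_of_nonneg_left (natCast_mul_exp_neg_le hn hδ) hL.le]
  calc log n ^ 2 * exp (-Y) < log n ^ 2 * exp (-δ) * exp (-X) := by
        rw [mul_assoc, ← exp_add]; gcongr; linarith
    _ ≤ X * exp (-X) / 2 := by rw [mul_div_right_comm]; gcongr

lemma apply_le_apply_zero_sub {n : ℕ} {z : Fin n → ℝ} {δ : ℝ}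
    (hz : ∀ i j : Fin n, i < j → z i - z j > δ) (h0 : 0 < n) {i : Fin n} (hi : i ≠ ⟨0, h0⟩) :
    z i ≤ z ⟨0, h0⟩ - δ := by
  linarith [hz ⟨0, h0⟩ i (Fin.lt_def.2 (Nat.pos_of_ne_zero fun h => hi (Fin.ext h)))]

section GibbsSums

variable {ι : Type*} {s : Finset ι} {z : ι → ℝ}

lemma sum_exp_sub_le_card_mul {c t : ℝ} (h : ∀ i ∈ s, z i ≤ c - t) :
    ∑ i ∈ s, exp (z i - c) ≤ #s * exp (-t) :=
  (sum_le_card_nsmul s _ _ fun i hi => exp_le_exp.2 (by linarith [h i hi])).trans_eq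
    (nsmul_eq_mul _ _)

lemma sum_exp_sub_mul_sub_le_card_mul {c t : ℝ} (ht : 1 ≤ t) (h : ∀ i ∈ s, z i ≤ c - t) :
    ∑ i ∈ s, exp (z i - c) * (c - z i) ≤ #s * (exp (-t) * t) :=
  (sum_le_card_nsmul s _ _ fun i hi => by
    rw [← neg_sub c]; exact exp_neg_mul_le_exp_neg_mul ht (by linarith [h i hi])).trans_eq
    (nsmul_eq_mul _ _)

lemma one_le_sum_exp_sub {i₀ : ι} (hi₀ : i₀ ∈ s) : 1 ≤ ∑ i ∈ s, exp (z i - z i₀) := by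
  simpa using single_le_sum (fun i _ => (exp_pos (z i - z i₀)).le) hi₀

variable [Fintype ι] {i₀ : ι} {m δ : ℝ}

lemma sum_exp_sub_le_one_add_card_mul (h : ∀ i ≠ i₀, z i ≤ z i₀ - δ) :
    ∑ i, exp (z i - z i₀) ≤ 1 + Fintype.card ι * exp (-δ) := by
  classical
  rw [← add_sum_erase _ _ (mem_univ i₀), sub_self, exp_zero]
  gcongr
  refine (sum_exp_sub_le_card_mul fun i hi => h i (ne_of_mem_erase hi)).trans ?_
  gcongr
  exact_mod_cast card_le_univ _

lemma sum_exp_sub_mul_sub_le_card_mul_of_forall_ne (hδ : 1 ≤ δ) (h : ∀ i ≠ i₀, z i ≤ z i₀ - δ)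
    (s : Finset ι) :
    ∑ i ∈ s, exp (z i - z i₀) * (z i₀ - z i) ≤ Fintype.card ι * (exp (-δ) * δ) := by
  classical
  rw [← sum_erase s (by rw [sub_self, mul_zero])]
  refine (sum_exp_sub_mul_sub_le_card_mul hδ fun i hi => h i (ne_of_mem_erase hi)).trans ?_
  gcongr
  exact_mod_cast card_le_univ _

lemma exp_sub_mul_sub_div_le_sum_div {j : ι} (h : ∀ i ≠ i₀, z i ≤ z i₀ - δ) (hj : j ∈ s)
    (hs : ∀ i ∈ s, z i ≤ m) :
    exp (z j - z i₀) * (m - z j) / (1 + Fintype.card ι * exp (-δ)) ≤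
      (∑ i ∈ s, exp (z i - z i₀) * (m - z i)) / ∑ i, exp (z i - z i₀) := by
  have hterm : ∀ i ∈ s, 0 ≤ exp (z i - z i₀) * (m - z i) :=
    fun i hi => mul_nonneg (exp_pos _).le (sub_nonneg.2 (hs i hi))
  exact div_le_div₀ (sum_nonneg hterm) (single_le_sum hterm hj)
    (sum_pos (fun i _ => exp_pos _) ⟨i₀, mem_univ _⟩) (sum_exp_sub_le_one_add_card_mul h)

lemma sum_exp_sub_mul_sub_div_sum_le {t : ℝ} (hm : m ≤ z i₀) (hs : ∀ i ∈ s, z i ≤ m)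
    (ht : 1 ≤ t) (hst : ∀ i ∈ s, z i ≤ z i₀ - t) :
    (∑ i ∈ s, exp (z i - z i₀) * (m - z i)) / ∑ i, exp (z i - z i₀) ≤ #s * (exp (-t) * t) :=
  calc (∑ i ∈ s, exp (z i - z i₀) * (m - z i)) / ∑ i, exp (z i - z i₀)
      ≤ ∑ i ∈ s, exp (z i - z i₀) * (m - z i) :=
        div_le_self (sum_nonneg fun i hi => mul_nonneg (exp_pos _).le (sub_nonneg.2 (hs i hi)))
          (one_le_sum_exp_sub (mem_univ i₀))
    _ ≤ ∑ i ∈ s, exp (z i - z i₀) * (z i₀ - z i) := by gcongr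
    _ ≤ #s * (exp (-t) * t) := sum_exp_sub_mul_sub_le_card_mul ht hst

lemma mem_Icc_of_sum_exp_sub_mul_sub_eq_zero (hδ : 1 ≤ δ) (h : ∀ i ≠ i₀, z i ≤ z i₀ - δ)
    (hi₀ : i₀ ∈ s) (hm : ∑ i ∈ s, exp (z i - z i₀) * (m - z i) = 0) :
    m ∈ Set.Icc (z i₀ - Fintype.card ι * (exp (-δ) * δ)) (z i₀) := by
  have hW := one_le_sum_exp_sub (z := z) hi₀
  have hR : 0 ≤ ∑ i ∈ s, exp (z i - z i₀) * (z i₀ - z i) := by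
    refine sum_nonneg fun i _ => mul_nonneg (exp_pos _).le (sub_nonneg.2 ?_)
    by_cases hi : i = i₀
    · rw [hi]
    · linarith [h i hi]
  have hR' := sum_exp_sub_mul_sub_le_card_mul_of_forall_ne hδ h s
  have key : (z i₀ - m) * ∑ i ∈ s, exp (z i - z i₀) =
      ∑ i ∈ s, exp (z i - z i₀) * (z i₀ - z i) := by
    rw [← sub_zero (∑ i ∈ s, _ * (z i₀ - z i)), ← hm, ← sum_sub_distrib, mul_sum]
    exact sum_congr rfl fun i _ => by ring
  constructor <;> nlinarith

end GibbsSums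

lemma sum_mul_div_sum_sub_eq_zero {ι : Type*} {w x : ι → ℝ} {s : Finset ι}
    (hw : ∑ i ∈ s, w i ≠ 0) :
    ∑ i ∈ s, w i * ((∑ i ∈ s, w i * x i) / ∑ i ∈ s, w i - x i) = 0 := by
  simp only [mul_sub, sum_sub_distrib, ← sum_mul, mul_div_cancel₀ _ hw, sub_self]

lemma sub_sum_mul_div_sum_eq_sum_compl {ι : Type*} [Fintype ι] [DecidableEq ι] {w x : ι → ℝ}
    {s : Finset ι} {m : ℝ} (hw : ∑ i, w i ≠ 0) (hm : ∑ i ∈ s, w i * (m - x i) = 0) :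
    m - (∑ i, w i * x i) / ∑ i, w i = (∑ i ∈ sᶜ, w i * (m - x i)) / ∑ i, w i := by
  rw [eq_div_iff hw, sub_mul, div_mul_cancel₀ _ hw, ← zero_add (∑ i ∈ sᶜ, _), ← hm,
    sum_add_sum_compl]
  simp only [mul_sub, sum_sub_distrib, ← sum_mul, mul_comm m]

lemma boltz_eq_div_sum_exp_sub {n : ℕ} (z : Fin n → ℝ) (c : ℝ) :
    boltz z = (∑ i, exp (z i - c) * z i) / ∑ i, exp (z i - c) := by
  have h : ∀ i, exp (z i - c) = exp (z i) * exp (-c) := fun i => by rw [← exp_add]; ring_nf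
  simp only [boltz, softmaxVec, h, mul_right_comm _ (exp (-c)), ← sum_mul,
    mul_div_mul_right _ _ (exp_pos _).ne', sum_div]
  exact sum_congr rfl fun i _ => by ring

lemma sub_boltz_eq_sum_compl_div {n : ℕ} {z : Fin n → ℝ} {s : Finset (Fin n)} {i₀ : Fin n}
    {m : ℝ} (hm : ∑ i ∈ s, exp (z i - z i₀) * (m - z i) = 0) :
    m - boltz z = (∑ i ∈ sᶜ, exp (z i - z i₀) * (m - z i)) / ∑ i, exp (z i - z i₀) := by
  rw [boltz_eq_div_sum_exp_sub z (z i₀)]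
  exact sub_sum_mul_div_sum_eq_sum_compl (sum_pos (fun i _ => exp_pos _) ⟨i₀, mem_univ _⟩).ne' hm

theorem le_boltz_sub_boltz {n : ℕ} {a b : Fin n → ℝ} {K : Finset (Fin n)} {i₀ j : Fin n}
    {δ : ℝ} (hδ : 1 ≤ δ) (hε : n * exp (-δ) ≤ 1 / 8) (hi₀ : i₀ ∈ K) (hj : j ∉ K)
    (hab : ∀ i ∈ K, a i = b i) (ha : ∀ i ≠ i₀, a i ≤ a i₀ - δ) (hb : ∀ i ≠ i₀, b i ≤ b i₀ - δ)
    (hbj : ∀ i ∉ K, b i ≤ a j - δ) :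
    (a i₀ - a j) * exp (-(a i₀ - a j)) / 2 ≤ boltz b - boltz a := by
  classical
  rw [neg_sub]
  have hb₀ : b i₀ = a i₀ := (hab i₀ hi₀).symm
  have hne : ∀ i ∉ K, i ≠ i₀ := fun i hi h => hi (h ▸ hi₀)
  -- `m` is the Gibbs mean of `a` over `K`, which is also that of `b`
  obtain ⟨m, hm_a⟩ : ∃ m, ∑ i ∈ K, exp (a i - a i₀) * (m - a i) = 0 :=
    ⟨_, sum_mul_div_sum_sub_eq_zero (zero_lt_one.trans_le (one_le_sum_exp_sub hi₀)).ne'⟩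
  have hm_b : ∑ i ∈ K, exp (b i - b i₀) * (m - b i) = 0 := by
    rw [hb₀, ← hm_a]; exact sum_congr rfl fun i hi => by rw [hab i hi]
  obtain ⟨hm_lo, hm_hi⟩ := mem_Icc_of_sum_exp_sub_mul_sub_eq_zero hδ ha hi₀ hm_a
  rw [Fintype.card_fin, ← mul_assoc] at hm_lo
  replace hm_lo : a i₀ - δ / 8 ≤ m := by nlinarith
  have hF := exp_sub_mul_sub_div_le_sum_div (m := m) ha (mem_compl.2 hj)
    (fun i hi => by linarith [ha i (hne i (mem_compl.1 hi))])
  have hS := sum_exp_sub_mul_sub_div_sum_le (hb₀ ▸ hm_hi)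
    (fun i hi => by linarith [hb i (hne i (mem_compl.1 hi))]) (t := a i₀ - a j + δ)
    (by linarith [ha j (hne j hj)]) (fun i hi => by linarith [hbj i (mem_compl.1 hi)])
  rw [← sub_boltz_eq_sum_compl_div hm_a, Fintype.card_fin] at hF
  rw [← sub_boltz_eq_sum_compl_div hm_b] at hS
  set X := a i₀ - a j
  set W := exp (a j - a i₀)
  have hX : δ ≤ X := by linarith [ha j (hne j hj)]
  have hW : 0 < W := exp_pos _
  have hXW : 0 ≤ X * W := mul_nonneg (by linarith) hW.le
  have hF' : 7 / 9 * (X * W) ≤ m - boltz a := by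
    refine le_trans ?_ hF
    rw [le_div_iff₀ (by positivity)]
    nlinarith [mul_le_mul_of_nonneg_left (by linarith : 7 / 8 * X ≤ m - a j) hW.le,
      mul_le_mul_of_nonneg_left hε hXW]
  have hS' : m - boltz b ≤ X * W / 4 := by
    have hcard : (#Kᶜ : ℝ) ≤ n := by exact_mod_cast (card_le_univ _).trans_eq (Fintype.card_fin n)
    have hWXδ : 0 ≤ W * (X + δ) := mul_nonneg hW.le (by linarith)
    rw [neg_add, exp_add, show -X = a j - a i₀ by ring] at hS
    calc m - boltz b ≤ #Kᶜ * exp (-δ) * (W * (X + δ)) := by linarith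
      _ ≤ n * exp (-δ) * (W * (X + δ)) := by gcongr
      _ ≤ 1 / 8 * (W * (2 * X)) := by gcongr; linarith
      _ = X * W / 4 := by ring
  linarith

/-- for strictly decreasing, `δ`-gapped vectors `a, b` (`δ ≥ 4 ln n`,
cross-separation `|a_i − b_j| > δ` whenever `a_i ≠ b_j`) which share their top `k`
entries (`1 ≤ k ≤ n−1`) and satisfy `a_{k+1} > b_{k+1}`,
`|Boltz(a) − Boltz(b)| > (ln n)² e^{−(a₁ − b_{k+1})}`. -/
theorem abs_boltz_sub_boltz_gt_of_top_k_same {n : ℕ} (hn : 2 ≤ n) (δ : ℝ)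
    (hδ : 4 * Real.log n ≤ δ) (a b : Fin n → ℝ)
    (hagap : ∀ i j : Fin n, i < j → a i - a j > δ)
    (hbgap : ∀ i j : Fin n, i < j → b i - b j > δ)
    (hab : ∀ i j : Fin n, a i ≠ b j → |a i - b j| > δ)
    (k : ℕ) (hk1 : 1 ≤ k) (hk2 : k ≤ n - 1)
    (hsame : ∀ i : Fin n, (i : ℕ) < k → a i = b i)
    (hk : a ⟨k, by omega⟩ > b ⟨k, by omega⟩) :
    |boltz a - boltz b| >
      Real.log n ^ 2 * Real.exp (-(a ⟨0, by omega⟩ - b ⟨k, by omega⟩)) := by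
  set i₀ : Fin n := ⟨0, by omega⟩
  set j : Fin n := ⟨k, by omega⟩
  have hbj : b j < a j - δ := by
    have := hab j j hk.ne'
    rw [abs_of_pos (sub_pos.2 hk)] at this
    linarith
  have hbtail : ∀ i ∉ Iio j, b i ≤ a j - δ := by
    intro i hi
    rcases (not_lt.1 (mem_Iio.not.1 hi)).eq_or_lt with rfl | h
    · exact hbj.le
    · linarith [hbgap j i h]
  have hij : i₀ < j := Fin.mk_lt_mk.2 hk1
  have key := le_boltz_sub_boltz (one_le_of_four_mul_log_le hn hδ) (natCast_mul_exp_neg_le hn hδ)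
    (mem_Iio.2 hij) (fun h => lt_irrefl j (mem_Iio.1 h)) (fun i hi => hsame i (mem_Iio.1 hi : i < j))
    (fun i => apply_le_apply_zero_sub hagap _) (fun i => apply_le_apply_zero_sub hbgap _) hbtail
  rw [gt_iff_lt, abs_sub_comm]
  calc log n ^ 2 * exp (-(a i₀ - b j))
      < (a i₀ - a j) * exp (-(a i₀ - a j)) / 2 :=
        log_sq_mul_exp_neg_lt hn hδ (by linarith [hagap i₀ j hij]) (by linarith)
    _ ≤ boltz b - boltz a := key
    _ ≤ |boltz b - boltz a| := le_abs_self _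
end

section
/- Let n ≥ 2, N ≥ 1, γ > 0 and δ ≥ 4 ln n. Let z^{(1)}, …, z^{(N)} ∈ ℝ^n satisfy: (i) |z^{(i)}_s| < γ for all i ∈ [N], s ∈ [n]; (ii) within each vector all entries are pairwise distinct; (iii) whenever z^{(i)}_s ≠ z^{(j)}_t (for any i, j ∈ [N], s, t ∈ [n]), one has |z^{(i)}_s − z^{(j)}_t| > δ; and (iv) for all i ≠ j the sets of entries of z^{(i)} and of z^{(j)} are distinct. Then |Boltz(z^{(i)})| ≤ γ for every i ∈ [N], and |Boltz(z^{(i)}) − Boltz(z^{(j)})| > (ln n)² · e^{−2γ} for all i ≠ j. -/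
/-!
Write `Z(S) = ∑_{x ∈ S} eˣ` and `Boltz(S) = ∑_{x ∈ S} x eˣ / Z(S)`. For finite sets `A, B`,
`Boltz(A) - Boltz(B) = ∑_{x ∈ A, y ∈ B} (x - y) e^{x+y} / (Z(A) Z(B))`, and the pairs lying in
`(A ∩ B)²` cancel. Let `a` be the largest element of `A ∆ B`, say `a ∈ A`, and `b = max B`. When
all points are `δ`-apart with `δ ≥ 4 log n`, every other surviving pair contributes at most
`2 e^{-δ} |a - b| e^{a+b}`, while `Z(A), Z(B) ≤ (9/8) e^{max(a, b)}`; so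
`|Boltz(A) - Boltz(B)| > w e^{-w} / 4` with `w = |a - b| ∈ (δ, 2γ)`. As `t e^{-t}` decreases on
`[1, ∞)`, and `n` points `δ`-apart in `(-γ, γ)` force `(n - 1) δ ≤ 2γ`, hence `(log n)² ≤ γ / 2`,
this exceeds `(log n)² e^{-2γ}`.
-/

open Finset Real
open scoped symmDiff

lemma mul_exp_neg_le_mul_exp_neg {d t : ℝ} (hd : 1 ≤ d) (hdt : d ≤ t) :
    t * exp (-t) ≤ d * exp (-d) := by
  have h : t ≤ d * exp (t - d) := by
    nlinarith [add_one_le_exp (t - d), exp_pos (t - d)]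
  calc t * exp (-t) ≤ d * exp (t - d) * exp (-t) := by gcongr
    _ = d * exp (-d) := by rw [mul_assoc, ← exp_add]; ring_nf

lemma mul_exp_le_of_add_le {d s c u : ℝ} (hu : 1 ≤ u) (hds : s + d ≤ c)
    (hus : s + u ≤ c) : d * exp s ≤ u * exp (c - u) := by
  set t := max d u
  have hst : s ≤ c - t := le_sub_comm.mp (max_le (by linarith) (by linarith))
  calc d * exp s ≤ t * exp (c - t) := by gcongr; exact le_max_left d u
    _ = exp c * (t * exp (-t)) := by rw [sub_eq_add_neg, exp_add]; ring
    _ ≤ exp c * (u * exp (-u)) :=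
      mul_le_mul_of_nonneg_left (mul_exp_neg_le_mul_exp_neg hu (le_max_right d u)) (exp_pos c).le
    _ = u * exp (c - u) := by rw [sub_eq_add_neg, exp_add]; ring

lemma add_add_abs_sub_eq_two_mul_max (x y : ℝ) : x + y + |x - y| = 2 * max x y := by
  rw [← max_sub_min_eq_abs']; linarith [min_add_max x y]

lemma pow_four_mul_exp_neg_le_one {n : ℕ} {δ : ℝ} (hn : 0 < n) (hδ : 4 * log n ≤ δ) :
    (n : ℝ) ^ 4 * exp (-δ) ≤ 1 := by
  have h4 : (n : ℝ) ^ 4 = exp (4 * log n) := by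
    rw [show (4 : ℝ) = (4 : ℕ) by norm_num, ← log_pow, exp_log (by positivity)]
  rw [h4, ← exp_add, exp_le_one_iff]
  linarith

lemma log_sq_mul_exp_neg_le {n : ℕ} {γ δ w : ℝ} (hn : 1 ≤ n) (hδ : 4 * log n ≤ δ)
    (hspread : ((n : ℝ) - 1) * δ ≤ 2 * γ) (hw1 : 1 ≤ w) (hw : w ≤ 2 * γ) :
    log n ^ 2 * exp (-2 * γ) ≤ w * exp (-w) / 4 := by
  have hn' : (1 : ℝ) ≤ n := by exact_mod_cast hn
  have hlog0 : 0 ≤ log n := log_nonneg hn'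
  have hlog : log n ≤ n - 1 := by linarith [log_le_sub_one_of_pos (by linarith : (0 : ℝ) < n)]
  have hsq : log n ^ 2 ≤ 2 * γ / 4 := by nlinarith
  have hmono := mul_exp_neg_le_mul_exp_neg hw1 hw
  calc log n ^ 2 * exp (-2 * γ) ≤ 2 * γ / 4 * exp (-(2 * γ)) := by
        rw [neg_mul]; gcongr
    _ ≤ w * exp (-w) / 4 := by linarith

lemma sum_product_self_eq_zero_of_antisymm {α : Type*} {C : Finset α} {f : α × α → ℝ}
    (hf : ∀ x y, f (y, x) = -f (x, y)) : ∑ p ∈ C ×ˢ C, f p = 0 := by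
  have h : ∑ p ∈ C ×ˢ C, f p = -∑ p ∈ C ×ˢ C, f p := by
    rw [sum_product]
    conv_rhs => rw [sum_comm]
    rw [← sum_neg_distrib]
    refine sum_congr rfl fun u _ => ?_
    rw [← sum_neg_distrib]
    exact sum_congr rfl fun v _ => hf v u
  linarith

lemma add_lt_of_separated {S : Set ℝ} {δ x y : ℝ} (hS : S.Pairwise fun x y => δ < |x - y|)
    (hx : x ∈ S) (hy : y ∈ S) (hxy : x < y) : x + δ < y := by
  have : δ < |x - y| := hS hx hy hxy.ne
  rw [abs_sub_comm, abs_of_pos (sub_pos.mpr hxy)] at this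
  linarith

lemma card_sub_one_mul_le_of_separated {S : Finset ℝ} {δ a b : ℝ} (hS : S.Nonempty)
    (hab : ∀ x ∈ S, a ≤ x ∧ x ≤ b) (hsep : (S : Set ℝ).Pairwise fun x y => δ < |x - y|) :
    ((#S : ℝ) - 1) * δ ≤ b - a := by
  induction S using Finset.induction_on_max generalizing b with
  | empty => simp at hS
  | insert c S hlt ih =>
    have hc := hab c (mem_insert_self c S)
    rcases S.eq_empty_or_nonempty with rfl | hne
    · simp only [insert_empty_eq, card_singleton, Nat.cast_one, sub_self, zero_mul]; linarith
    have hS' : ∀ x ∈ S, a ≤ x ∧ x ≤ c - δ := fun x hx =>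
      ⟨(hab x (mem_insert_of_mem hx)).1, by
        linarith [add_lt_of_separated hsep (by simp [hx]) (by simp) (hlt x hx)]⟩
    have := ih hne hS' (hsep.mono (by simp))
    rw [card_insert_of_notMem (fun h => (hlt c h).false)]
    push_cast
    linarith

noncomputable def expSum (S : Finset ℝ) : ℝ := ∑ x ∈ S, exp x

noncomputable def boltzSet (S : Finset ℝ) : ℝ := (∑ x ∈ S, x * exp x) / expSum S

lemma expSum_pos {S : Finset ℝ} (hS : S.Nonempty) : 0 < expSum S :=
  sum_pos (fun x _ => exp_pos x) hS

lemma expSum_le_of_separated {S : Finset ℝ} {δ M : ℝ}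
    (hsep : (S : Set ℝ).Pairwise fun x y => δ < |x - y|) (hM : ∀ x ∈ S, x ≤ M) :
    expSum S ≤ (1 + #S * exp (-δ)) * exp M := by
  rcases S.eq_empty_or_nonempty with rfl | hS
  · rw [expSum, sum_empty]; positivity
  set m := S.max' hS
  have hm : m ∈ S := S.max'_mem hS
  have hrest : ∀ x ∈ S.erase m, exp x ≤ exp (-δ) * exp M := fun x hx => by
    have := add_lt_of_separated hsep (mem_of_mem_erase hx) hm
      (S.lt_max'_of_mem_erase_max' hS hx)
    rw [← exp_add, exp_le_exp]; linarith [hM m hm]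
  calc expSum S = ∑ x ∈ S.erase m, exp x + exp m := (sum_erase_add _ _ hm).symm
    _ ≤ #S * (exp (-δ) * exp M) + exp M := by
      gcongr
      · calc ∑ x ∈ S.erase m, exp x ≤ #(S.erase m) * (exp (-δ) * exp M) :=
              (sum_le_card_nsmul _ _ _ hrest).trans_eq (nsmul_eq_mul _ _)
          _ ≤ #S * (exp (-δ) * exp M) := by gcongr; exact erase_subset m S
      · exact hM m hm
    _ = (1 + #S * exp (-δ)) * exp M := by ring

lemma boltz_eq_boltzSet_image {n : ℕ} {z : Fin n → ℝ} (hz : Function.Injective z) :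
    boltz z = boltzSet (univ.image z) := by
  rw [boltzSet, expSum, sum_image (fun s _ t _ h => hz h), sum_image (fun s _ t _ h => hz h),
    boltz, sum_div]
  simp only [softmaxVec, mul_div_assoc]

lemma boltzSet_sub_boltzSet {A B : Finset ℝ} (hA : A.Nonempty) (hB : B.Nonempty) :
    boltzSet A - boltzSet B =
      (∑ p ∈ A ×ˢ B, (p.1 - p.2) * exp (p.1 + p.2)) / (expSum A * expSum B) := by
  rw [boltzSet, boltzSet, div_sub_div _ _ (expSum_pos hA).ne' (expSum_pos hB).ne', expSum,
    expSum, sum_mul_sum, sum_mul_sum, sum_product, ← sum_sub_distrib]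
  congr 1
  refine sum_congr rfl fun x _ => ?_
  rw [← sum_sub_distrib]
  refine sum_congr rfl fun y _ => ?_
  rw [exp_add]; ring

lemma le_max_of_mem_union {A B : Finset ℝ} {a b x : ℝ} (ha : ∀ x ∈ A ∆ B, x ≤ a)
    (hb : ∀ y ∈ B, y ≤ b) (hx : x ∈ A ∪ B) : x ≤ max a b := by
  by_cases hxB : x ∈ B
  · exact (hb x hxB).trans (le_max_right a b)
  · have hxA : x ∈ A := (mem_union.1 hx).resolve_right hxB
    exact (ha x (mem_symmDiff.2 (.inl ⟨hxA, hxB⟩))).trans (le_max_left a b)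

section DominantPair

variable {A B : Finset ℝ} {a b δ : ℝ}
  (hsep : ((A ∪ B : Finset ℝ) : Set ℝ).Pairwise fun x y => δ < |x - y|)
  (haA : a ∈ A) (haB : a ∉ B) (ha : ∀ x ∈ A ∆ B, x ≤ a) (hbB : b ∈ B) (hb : ∀ y ∈ B, y ≤ b)
include hsep haA haB ha hbB hb

lemma add_add_le_of_mem_product_sdiff {x y : ℝ}
    (hxy : (x, y) ∈ A ×ˢ B \ (A ∩ B) ×ˢ (A ∩ B)) (hab : (x, y) ≠ (a, b)) :
    x + y + δ ≤ a + b := by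
  have sep : ∀ {u v}, u ∈ A ∪ B → v ∈ A ∪ B → u < v → u + δ < v := fun hu hv =>
    add_lt_of_separated hsep (mem_coe.2 hu) (mem_coe.2 hv)
  simp only [mem_sdiff, mem_product, mem_inter] at hxy
  obtain ⟨⟨hxA, hyB⟩, hnot⟩ := hxy
  by_cases hxB : x ∈ B
  · have hyA : y ∉ A := fun hyA => hnot ⟨⟨hxA, hxB⟩, hyA, hyB⟩
    have hya : y ≤ a := ha y (mem_symmDiff.2 (.inr ⟨hyB, hyA⟩))
    have := sep (mem_union_right _ hyB) (mem_union_left _ haA)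
      (hya.lt_of_ne (by rintro rfl; exact haB hyB))
    linarith [hb x hxB]
  · have hxa : x ≤ a := ha x (mem_symmDiff.2 (.inl ⟨hxA, hxB⟩))
    by_cases hyb : y = b
    · subst hyb
      have := sep (mem_union_left _ hxA) (mem_union_left _ haA)
        (hxa.lt_of_ne (by rintro rfl; exact hab rfl))
      linarith
    · have := sep (mem_union_right _ hyB) (mem_union_right _ hbB) ((hb y hyB).lt_of_ne hyb)
      linarith

lemma abs_sub_mul_exp_add_le (hδ : 1 ≤ δ) {x y : ℝ}
    (hxy : (x, y) ∈ A ×ˢ B \ (A ∩ B) ×ˢ (A ∩ B)) (hab : (x, y) ≠ (a, b)) :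
    |(x - y) * exp (x + y)| ≤ 2 * exp (-δ) * (|a - b| * exp (a + b)) := by
  have hsum := add_add_le_of_mem_product_sdiff hsep haA haB ha hbB hb hxy hab
  have hw : δ < |a - b| := hsep (mem_coe.2 (mem_union_left _ haA))
    (mem_coe.2 (mem_union_right _ hbB)) (by rintro rfl; exact haB hbB)
  obtain ⟨hxA, hyB⟩ := mem_product.1 (mem_sdiff.1 hxy).1
  have hxM := le_max_of_mem_union ha hb (mem_union_left _ hxA)
  have hyM := le_max_of_mem_union ha hb (mem_union_right _ hyB)
  have hmax := add_add_abs_sub_eq_two_mul_max a b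
  have hdom := mul_exp_le_of_add_le (d := |x - y|) (s := x + y) (u := |a - b| + δ)
    (c := 2 * max a b) (by linarith)
    (by linarith [add_add_abs_sub_eq_two_mul_max x y, max_le hxM hyM]) (by linarith)
  calc |(x - y) * exp (x + y)| = |x - y| * exp (x + y) := by
        rw [abs_mul, abs_of_pos (exp_pos _)]
    _ ≤ (|a - b| + δ) * exp (2 * max a b - (|a - b| + δ)) := hdom
    _ ≤ 2 * |a - b| * exp (-δ + (a + b)) := by
        rw [show 2 * max a b - (|a - b| + δ) = -δ + (a + b) by linarith]
        gcongr; linarith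
    _ = 2 * exp (-δ) * (|a - b| * exp (a + b)) := by rw [exp_add]; ring

lemma le_abs_sum_product_sub_mul_exp_add (hδ : 1 ≤ δ) :
    (1 - 2 * #A * #B * exp (-δ)) * (|a - b| * exp (a + b)) ≤
      |∑ p ∈ A ×ˢ B, (p.1 - p.2) * exp (p.1 + p.2)| := by
  set k : ℝ × ℝ → ℝ := fun p => (p.1 - p.2) * exp (p.1 + p.2)
  set R := A ×ˢ B \ (A ∩ B) ×ˢ (A ∩ B)
  set E := 2 * exp (-δ) * (|a - b| * exp (a + b))
  have hcancel : ∑ p ∈ A ×ˢ B, k p = ∑ p ∈ R, k p := by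
    rw [← sum_sdiff (product_subset_product inter_subset_left inter_subset_right),
      sum_product_self_eq_zero_of_antisymm (fun x y => by simp only [k, add_comm y]; ring),
      add_zero]
  have habR : (a, b) ∈ R := by simp [R, haA, hbB, haB]
  have hrest : |∑ p ∈ R.erase (a, b), k p| ≤ #A * #B * E := by
    calc |∑ p ∈ R.erase (a, b), k p| ≤ ∑ p ∈ R.erase (a, b), |k p| := abs_sum_le_sum_abs _ _
      _ ≤ #(R.erase (a, b)) * E :=
        (sum_le_card_nsmul _ _ _ fun p hp => abs_sub_mul_exp_add_le hsep haA haB ha hbB hb hδ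
          (mem_of_mem_erase hp) (ne_of_mem_erase hp)).trans_eq (nsmul_eq_mul _ _)
      _ ≤ #(A ×ˢ B) * E := by gcongr; exact (erase_subset _ _).trans sdiff_subset
      _ = #A * #B * E := by rw [card_product]; push_cast; rfl
  have hab : |k (a, b)| = |a - b| * exp (a + b) := by simp [k, abs_mul]
  rw [hcancel, ← add_sum_erase _ _ habR]
  calc (1 - 2 * #A * #B * exp (-δ)) * (|a - b| * exp (a + b))
      = |k (a, b)| - #A * #B * E := by rw [hab]; ring
    _ ≤ |k (a, b)| - |∑ p ∈ R.erase (a, b), k p| := by linarith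
    _ ≤ _ := abs_sub_abs_le_abs_add _ _

lemma mul_exp_neg_le_abs_boltzSet_sub (hδ : 1 ≤ δ) :
    (1 - 2 * #A * #B * exp (-δ)) * (|a - b| * exp (-|a - b|)) ≤
      (1 + #A * exp (-δ)) * (1 + #B * exp (-δ)) * |boltzSet A - boltzSet B| := by
  set M := max a b
  have hM : ∀ x ∈ A ∪ B, x ≤ M := fun x hx => le_max_of_mem_union ha hb hx
  have hZA := expSum_le_of_separated (hsep.mono (by simp)) fun x hx => hM x (mem_union_left _ hx)
  have hZB := expSum_le_of_separated (hsep.mono (by simp)) fun x hx => hM x (mem_union_right _ hx)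
  have hZApos := expSum_pos ⟨a, haA⟩
  have hZBpos := expSum_pos ⟨b, hbB⟩
  have hD := le_abs_sum_product_sub_mul_exp_add hsep haA haB ha hbB hb hδ
  set P := (1 + #A * exp (-δ)) * (1 + #B * exp (-δ))
  have hZ : expSum A * expSum B ≤ P * (exp M * exp M) := by
    calc expSum A * expSum B ≤ ((1 + #A * exp (-δ)) * exp M) * ((1 + #B * exp (-δ)) * exp M) :=
          mul_le_mul hZA hZB hZBpos.le (hZApos.le.trans hZA)
      _ = P * (exp M * exp M) := by ring
  have hP : 0 ≤ P := by positivity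
  have hexp : exp (a + b) = exp (-|a - b|) * (exp M * exp M) := by
    rw [← exp_add, ← exp_add]; congr 1; linarith [add_add_abs_sub_eq_two_mul_max a b]
  rw [boltzSet_sub_boltzSet ⟨a, haA⟩ ⟨b, hbB⟩, abs_div, abs_of_pos (mul_pos hZApos hZBpos),
    ← mul_div_assoc, le_div_iff₀ (mul_pos hZApos hZBpos)]
  set c := 1 - 2 * #A * #B * exp (-δ)
  rcases le_or_gt 0 (c * (|a - b| * exp (-|a - b|))) with hc | hc
  · calc c * (|a - b| * exp (-|a - b|)) * (expSum A * expSum B)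
        ≤ c * (|a - b| * exp (-|a - b|)) * (P * (exp M * exp M)) := by gcongr
      _ = P * (c * (|a - b| * exp (a + b))) := by rw [hexp]; ring
      _ ≤ P * |∑ p ∈ A ×ˢ B, (p.1 - p.2) * exp (p.1 + p.2)| := by gcongr
  · exact (mul_neg_of_neg_of_pos hc (mul_pos hZApos hZBpos)).le.trans
      (mul_nonneg hP (abs_nonneg _))

lemma mul_exp_neg_div_four_lt_abs_boltzSet_sub {n : ℕ} (hn : 2 ≤ n) (hA : #A ≤ n)
    (hB : #B ≤ n) (hε : (n : ℝ) ^ 4 * exp (-δ) ≤ 1) (hδ : 1 ≤ δ) :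
    |a - b| * exp (-|a - b|) / 4 < |boltzSet A - boltzSet B| := by
  have key := mul_exp_neg_le_abs_boltzSet_sub hsep haA haB ha hbB hb hδ
  have hab : 0 < |a - b| := abs_pos.2 (sub_ne_zero.2 fun h => haB (h ▸ hbB))
  have hv : 0 < |a - b| * exp (-|a - b|) := by positivity
  have hnR : (2 : ℝ) ≤ n := by exact_mod_cast hn
  have hAR : (#A : ℝ) ≤ n := by exact_mod_cast hA
  have hBR : (#B : ℝ) ≤ n := by exact_mod_cast hB
  have hε0 := (exp_pos (-δ)).le
  have hnε : n * exp (-δ) ≤ 1 / 8 := by nlinarith [pow_le_pow_left₀ (by norm_num) hnR 3]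
  have hn2ε : n * n * exp (-δ) ≤ 1 / 4 := by nlinarith [pow_le_pow_left₀ (by norm_num) hnR 2]
  have hc : 1 / 2 ≤ 1 - 2 * #A * #B * exp (-δ) := by
    nlinarith [mul_le_mul hAR hBR (Nat.cast_nonneg _) (by positivity : (0 : ℝ) ≤ n)]
  have hP : (1 + #A * exp (-δ)) * (1 + #B * exp (-δ)) ≤ 9 / 8 * (9 / 8) := by
    gcongr <;> nlinarith
  nlinarith [abs_nonneg (boltzSet A - boltzSet B)]

end DominantPair

theorem lt_abs_boltzSet_sub {n : ℕ} {γ δ : ℝ} {A B : Finset ℝ} (hn : 2 ≤ n) (hA : #A = n)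
    (hB : #B = n) (hγ : ∀ x ∈ A ∪ B, |x| < γ)
    (hsep : ((A ∪ B : Finset ℝ) : Set ℝ).Pairwise fun x y => δ < |x - y|)
    (hδ : 4 * log n ≤ δ) (hAB : A ≠ B) :
    log n ^ 2 * exp (-2 * γ) < |boltzSet A - boltzSet B| := by
  wlog hmax : ∃ a ∈ A, a ∉ B ∧ ∀ x ∈ A ∆ B, x ≤ a generalizing A B
  · rw [abs_sub_comm]
    refine this hB hA (by rwa [union_comm]) (by rwa [union_comm]) hAB.symm ?_
    obtain ⟨a, ha, hmax'⟩ := (A ∆ B).exists_max_image id (symmDiff_nonempty.2 hAB)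
    rcases mem_symmDiff.1 ha with ⟨haA, haB⟩ | ⟨haB, haA⟩
    · exact absurd ⟨a, haA, haB, hmax'⟩ hmax
    · exact ⟨a, haB, haA, by rwa [symmDiff_comm]⟩
  obtain ⟨a, haA, haB, ha⟩ := hmax
  obtain ⟨b, hbB, hb⟩ := B.exists_max_image id (card_pos.1 (by omega))
  have hδ1 : 1 ≤ δ := by
    have := log_le_log (by norm_num) (show (2 : ℝ) ≤ n by exact_mod_cast hn)
    linarith [log_two_gt_d9]
  have hw : δ < |a - b| := hsep (mem_coe.2 (mem_union_left _ haA))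
    (mem_coe.2 (mem_union_right _ hbB)) (by rintro rfl; exact haB hbB)
  have hw2 : |a - b| ≤ 2 * γ := (abs_sub a b).trans (by
    linarith [hγ a (mem_union_left _ haA), hγ b (mem_union_right _ hbB)])
  have hspread : ((n : ℝ) - 1) * δ ≤ γ - -γ := by
    rw [← hA]
    refine card_sub_one_mul_le_of_separated (card_pos.1 (by omega)) (fun x hx => ?_)
      (hsep.mono (by simp))
    exact (abs_lt.1 (hγ x (mem_union_left _ hx))).imp le_of_lt le_of_lt
  calc log n ^ 2 * exp (-2 * γ) ≤ |a - b| * exp (-|a - b|) / 4 :=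
        log_sq_mul_exp_neg_le (by omega) hδ (by linarith) (by linarith) hw2
    _ < |boltzSet A - boltzSet B| :=
        mul_exp_neg_div_four_lt_abs_boltzSet_sub hsep haA haB ha hbB hb hn hA.le hB.le
          (pow_four_mul_exp_neg_le_one (by omega) hδ) hδ1

lemma abs_boltz_le {n : ℕ} [NeZero n] {z : Fin n → ℝ} {γ : ℝ} (h : ∀ i, |z i| ≤ γ) :
    |boltz z| ≤ γ := by
  have hZ : 0 < ∑ j, exp (z j) := sum_pos (fun _ _ => exp_pos _) univ_nonempty
  have hw : ∀ i, 0 ≤ softmaxVec z i := fun i => by unfold softmaxVec; positivity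
  have hsum : ∑ i, softmaxVec z i = 1 := by
    simp only [softmaxVec, ← sum_div, div_self hZ.ne']
  calc |boltz z| ≤ ∑ i, |z i * softmaxVec z i| := abs_sum_le_sum_abs _ _
    _ ≤ ∑ i, γ * softmaxVec z i := sum_le_sum fun i _ => by
        rw [abs_mul, abs_of_nonneg (hw i)]; exact mul_le_mul_of_nonneg_right (h i) (hw i)
    _ = γ := by rw [← mul_sum, hsum, mul_one]

theorem boltz_preserves_separation_general {n N : ℕ} (hn : 2 ≤ n)
    (γ δ : ℝ) (hδ : 4 * Real.log n ≤ δ)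
    (z : Fin N → Fin n → ℝ)
    (hbound : ∀ i s, |z i s| < γ)
    (hdistinct : ∀ i, ∀ s t : Fin n, s ≠ t → z i s ≠ z i t)
    (hsep : ∀ i j, ∀ s t : Fin n, z i s ≠ z j t → |z i s - z j t| > δ)
    (hsets : ∀ i j, i ≠ j → Set.range (z i) ≠ Set.range (z j)) :
    (∀ i, |boltz (z i)| ≤ γ) ∧
      (∀ i j, i ≠ j →
        |boltz (z i) - boltz (z j)| > Real.log n ^ 2 * Real.exp (-2 * γ)) := by
  have : NeZero n := ⟨by omega⟩
  refine ⟨fun i => abs_boltz_le fun s => (hbound i s).le, fun i j hij => ?_⟩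
  have hinj : ∀ k, Function.Injective (z k) := fun k s t hst => by
    by_contra h; exact hdistinct k s t h hst
  have hcard : ∀ k, #(univ.image (z k)) = n := fun k => by
    rw [card_image_of_injective _ (hinj k), card_univ, Fintype.card_fin]
  have hmem : ∀ x ∈ univ.image (z i) ∪ univ.image (z j), ∃ k s, z k s = x := by
    simp only [mem_union, mem_image, mem_univ, true_and]
    rintro x (⟨s, rfl⟩ | ⟨s, rfl⟩) <;> exact ⟨_, s, rfl⟩
  rw [boltz_eq_boltzSet_image (hinj i), boltz_eq_boltzSet_image (hinj j)]
  refine lt_abs_boltzSet_sub hn (hcard i) (hcard j) (fun x hx => ?_) ?_ hδ fun h => ?_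
  · obtain ⟨k, s, rfl⟩ := hmem x hx
    exact hbound k s
  · intro x hx y hy hxy
    obtain ⟨k, s, rfl⟩ := hmem x hx
    obtain ⟨l, t, rfl⟩ := hmem y hy
    exact hsep k l s t hxy
  · apply hsets i j hij
    simpa [Set.image_univ] using congrArg ((↑) : Finset ℝ → Set ℝ) h

/-- the Boltzmann operator preserves separation.  Given `(γ, δ)`-separated
vectors `z⁽¹⁾, …, z⁽ᴺ⁾` with `δ ≥ 4 ln n`, pairwise-distinct entries in each vector and
distinct entry sets across vectors, one has `|Boltz(z⁽ⁱ⁾)| ≤ γ` and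
`|Boltz(z⁽ⁱ⁾) − Boltz(z⁽ʲ⁾)| > (ln n)² e^{−2γ}` for `i ≠ j`. -/
theorem boltz_preserves_separation {n N : ℕ} (hn : 2 ≤ n) (hN : 1 ≤ N)
    (γ δ : ℝ) (hγ : 0 < γ) (hδ : 4 * Real.log n ≤ δ)
    (z : Fin N → Fin n → ℝ)
    (hbound : ∀ i s, |z i s| < γ)
    (hdistinct : ∀ i, ∀ s t : Fin n, s ≠ t → z i s ≠ z i t)
    (hsep : ∀ i j, ∀ s t : Fin n, z i s ≠ z j t → |z i s - z j t| > δ)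
    (hsets : ∀ i j, i ≠ j → Set.range (z i) ≠ Set.range (z j)) :
    (∀ i, |boltz (z i)| ≤ γ) ∧
      (∀ i j, i ≠ j →
        |boltz (z i) - boltz (z j)| > Real.log n ^ 2 * Real.exp (-2 * γ)) :=
  boltz_preserves_separation_general hn γ δ hδ z hbound hdistinct hsep hsets
end

section
/- For every d ≥ 1 and every nonempty finite subset 𝒳 ⊂ ℝ^d, there exists a unit vector u ∈ ℝ^d such that for all x, x′ ∈ 𝒳: (1/|𝒳|²)·√(8/(πd))·‖x − x′‖₂ ≤ |u^⊤(x − x′)| ≤ ‖x − x′‖₂, where |𝒳| denotes the cardinality of 𝒳. -/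
/-!
Pick `g` in the unit ball of `ℝ^d` and call it bad for a pair `{x, x'}` when
`|⟪g, x - x'⟫| < ε ‖x - x'‖`. The bad set is a slab of width `2ε` around a hyperplane, so its
intersection with the ball has volume at most `2ε ω_{d-1}`, where `ω_k` is the volume of the unit
ball of `ℝ^k`. For `ε = √(8/(πd)) / n²` with `n = |𝒳|`, the `n(n-1)/2` unordered pairs have
total bad volume below `√(8/(πd)) ω_{d-1}`, which is `< ω_d` by log-convexity of `Γ`. Hence some
`g` in the ball is good for every pair, and `u = g / ‖g‖` only enlarges each `|⟪u, x - x'⟫|`.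
-/

open MeasureTheory Module Metric Real
open scoped RealInnerProductSpace

noncomputable def unitBallVolume (n : ℕ) : ℝ := √π ^ n / Gamma (n / 2 + 1)

lemma unitBallVolume_pos (n : ℕ) : 0 < unitBallVolume n := by
  unfold unitBallVolume
  have := Gamma_pos_of_pos (by positivity : (0:ℝ) < n / 2 + 1)
  positivity

lemma Real.Gamma_add_half_le {y : ℝ} (hy : 0 < y) : Gamma (y + 1 / 2) ≤ √y * Gamma y := by
  have hΓ := Gamma_pos_of_pos hy
  calc Gamma (y + 1 / 2) = Gamma (1 / 2 * y + 1 / 2 * (y + 1)) := by ring_nf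
    _ ≤ Gamma y ^ (1 / 2 : ℝ) * Gamma (y + 1) ^ (1 / 2 : ℝ) :=
      Gamma_mul_add_mul_le_rpow_Gamma_mul_rpow_Gamma hy (by linarith) (by norm_num)
        (by norm_num) (by norm_num)
    _ = √(y * Gamma y ^ 2) := by
      rw [Gamma_add_one hy.ne', sqrt_eq_rpow, ← mul_rpow hΓ.le (by positivity)]
      ring_nf
    _ = √y * Gamma y := by rw [sqrt_mul hy.le, sqrt_sq hΓ.le]

lemma sqrt_pi_mul_unitBallVolume_le (n : ℕ) :
    √π * unitBallVolume n ≤ √(n / 2 + 1) * unitBallVolume (n + 1) := by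
  have hΓ := Gamma_pos_of_pos (by positivity : (0:ℝ) < n / 2 + 1)
  have hΓ' := Gamma_pos_of_pos (by positivity : (0:ℝ) < (n + 1 : ℕ) / 2 + 1)
  have hle : Gamma ((n + 1 : ℕ) / 2 + 1) ≤ √(n / 2 + 1) * Gamma (n / 2 + 1) := by
    convert Real.Gamma_add_half_le (by positivity : (0:ℝ) < n / 2 + 1) using 2
    push_cast; ring
  unfold unitBallVolume
  rw [pow_succ, mul_div_assoc', mul_div_assoc', div_le_div_iff₀ hΓ hΓ']
  calc √π * √π ^ n * Gamma ((n + 1 : ℕ) / 2 + 1)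
      ≤ √π * √π ^ n * (√(n / 2 + 1) * Gamma (n / 2 + 1)) := by gcongr
    _ = √(n / 2 + 1) * (√π ^ n * √π) * Gamma (n / 2 + 1) := by ring

lemma sqrt_mul_unitBallVolume_lt {d : ℕ} (hd : 1 ≤ d) :
    √(8 / (π * d)) * unitBallVolume (d - 1) < unitBallVolume d := by
  obtain ⟨n, rfl⟩ : ∃ n, d = n + 1 := ⟨d - 1, by omega⟩
  rw [Nat.add_sub_cancel]
  push_cast
  have hs : 0 < √((n : ℝ) / 2 + 1) := by positivity
  have hc : √(8 / (π * (n + 1))) * √(n / 2 + 1) < √π := by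
    rw [← sqrt_mul (by positivity)]
    refine sqrt_lt_sqrt (by positivity) ?_
    rw [div_mul_eq_mul_div, div_lt_iff₀ (by positivity)]
    have : (9 : ℝ) < π * π := by nlinarith [pi_gt_three]
    nlinarith
  refine lt_of_mul_lt_mul_left ?_ hs.le
  calc √(n / 2 + 1) * (√(8 / (π * (n + 1))) * unitBallVolume n)
      = (√(8 / (π * (n + 1))) * √(n / 2 + 1)) * unitBallVolume n := by ring
    _ < √π * unitBallVolume n := by gcongr; exact unitBallVolume_pos n
    _ ≤ √(n / 2 + 1) * unitBallVolume (n + 1) := sqrt_pi_mul_unitBallVolume_le n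

section
variable {E : Type*} [NormedAddCommGroup E] [InnerProductSpace ℝ E]

lemma LinearIsometryEquiv.toSpanUnitSingleton_symm_orthogonalProjectionOnto {v : E}
    (hv : ‖v‖ = 1) (g : E) :
    (LinearIsometryEquiv.toSpanUnitSingleton v hv).symm ((ℝ ∙ v).orthogonalProjectionOnto g) =
      ⟪v, g⟫ := by
  rw [LinearIsometryEquiv.symm_apply_eq]
  ext
  simp [Submodule.starProjection_singleton, hv]

lemma exists_norm_eq_one_abs_inner_le [Nontrivial E] {g : E} (hg : ‖g‖ ≤ 1) :
    ∃ u : E, ‖u‖ = 1 ∧ ∀ x, |⟪g, x⟫| ≤ |⟪u, x⟫| := by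
  rcases eq_or_ne g 0 with rfl | hg0
  · obtain ⟨u, hu⟩ := exists_norm_eq E (zero_le_one' ℝ)
    exact ⟨u, hu, fun x ↦ by simp⟩
  · refine ⟨‖g‖⁻¹ • g, norm_smul_inv_norm hg0, fun x ↦ ?_⟩
    rw [real_inner_smul_left, abs_mul, abs_inv, abs_norm]
    exact le_mul_of_one_le_left (abs_nonneg _) ((one_le_inv₀ (norm_pos_iff.2 hg0)).2 hg)

variable [FiniteDimensional ℝ E] [MeasurableSpace E] [BorelSpace E]

lemma volume_ball_zero_one :
    volume (ball (0 : E) 1) = ENNReal.ofReal (unitBallVolume (finrank ℝ E)) := by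
  rcases subsingleton_or_nontrivial E with hE | hE
  · have hb : ball (0 : E) 1 = parallelepiped (stdOrthonormalBasis ℝ E) :=
      Subsingleton.eq_univ_of_nonempty (nonempty_ball.2 one_pos) |>.trans
        (Subsingleton.eq_univ_of_nonempty
          ⟨0, (mem_parallelepiped_iff _ _).2 ⟨0, by simp, by simp⟩⟩).symm
    simp [hb, unitBallVolume, finrank_zero_of_subsingleton,
      OrthonormalBasis.volume_parallelepiped]
  · simp [InnerProductSpace.volume_ball, unitBallVolume]

lemma volume_abs_inner_le_inter_ball_le {v : E} (hv : ‖v‖ = 1) (a : ℝ) :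
    volume ({g : E | |⟪v, g⟫| ≤ a} ∩ ball 0 1) ≤
      ENNReal.ofReal (2 * a) * ENNReal.ofReal (unitBallVolume (finrank ℝ E - 1)) := by
  -- `e g = (⟪v, g⟫, component of g orthogonal to v)`, so the slab lies in `[-a, a] × ball 0 1`.
  let e : E ≃ₗᵢ[ℝ] WithLp 2 (ℝ × (ℝ ∙ v)ᗮ) := (ℝ ∙ v).orthogonalDecomposition.trans <|
    LinearIsometryEquiv.withLpProdCongr 2 (LinearIsometryEquiv.toSpanUnitSingleton v hv).symm
      (LinearIsometryEquiv.refl ℝ (ℝ ∙ v)ᗮ)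
  have he : MeasurePreserving (fun g ↦ WithLp.ofLp (e g)) :=
    (WithLp.volume_preserving_ofLp ℝ (ℝ ∙ v)ᗮ).comp e.measurePreserving
  have hsub : {g : E | |⟪v, g⟫| ≤ a} ∩ ball 0 1 ⊆
      (fun g ↦ WithLp.ofLp (e g)) ⁻¹' (Set.Icc (-a) a ×ˢ ball 0 1) := by
    rintro g ⟨hga, hg1⟩
    refine ⟨?_, ?_⟩
    · simpa [e, LinearIsometryEquiv.toSpanUnitSingleton_symm_orthogonalProjectionOnto, abs_le]
        using hga
    · have h := WithLp.prod_norm_sq_eq_of_L2 (e g)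
      rw [e.norm_map] at h
      simp only [mem_ball_zero_iff] at hg1 ⊢
      change ‖(e g).snd‖ < 1
      nlinarith [norm_nonneg (e g).snd, norm_nonneg g, sq_nonneg ‖(e g).fst‖]
  have hK : finrank ℝ (ℝ ∙ v)ᗮ = finrank ℝ E - 1 := by
    have := (ℝ ∙ v).finrank_add_finrank_orthogonal
    rw [finrank_span_singleton (by rintro rfl; simp at hv)] at this
    omega
  calc volume ({g : E | |⟪v, g⟫| ≤ a} ∩ ball 0 1)
      ≤ volume (Set.Icc (-a) a ×ˢ ball (0 : (ℝ ∙ v)ᗮ) 1) :=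
        (measure_mono hsub).trans_eq
          (he.measure_preimage (measurableSet_Icc.prod measurableSet_ball).nullMeasurableSet)
    _ = _ := by
      rw [Measure.volume_eq_prod, Measure.prod_prod, Real.volume_Icc, volume_ball_zero_one, hK]
      ring_nf

lemma volume_abs_inner_lt_mul_norm_inter_ball_le (v : E) (a : ℝ) :
    volume ({g : E | |⟪v, g⟫| < a * ‖v‖} ∩ ball 0 1) ≤
      ENNReal.ofReal (2 * a) * ENNReal.ofReal (unitBallVolume (finrank ℝ E - 1)) := by
  rcases eq_or_ne v 0 with rfl | hv
  · simp
  refine (measure_mono ?_).trans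
    (volume_abs_inner_le_inter_ball_le (norm_smul_inv_norm (𝕜 := ℝ) hv) a)
  rintro g ⟨hg, hg1⟩
  refine ⟨?_, hg1⟩
  change |⟪‖v‖⁻¹ • v, g⟫| ≤ a
  rw [real_inner_smul_left, abs_mul, abs_inv, abs_norm, inv_mul_le_iff₀ (norm_pos_iff.2 hv)]
  exact (mul_comm a _ ▸ hg).le

theorem exists_norm_lt_one_forall_mul_norm_le_abs_inner {ι : Type*} [Fintype ι] (v : ι → E)
    {ε : ℝ} (h : Fintype.card ι * (2 * ε) * unitBallVolume (finrank ℝ E - 1) <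
      unitBallVolume (finrank ℝ E)) :
    ∃ g : E, ‖g‖ < 1 ∧ ∀ i, ε * ‖v i‖ ≤ |⟪g, v i⟫| := by
  let bad i := {g : E | |⟪v i, g⟫| < ε * ‖v i‖} ∩ ball 0 1
  have hlt : volume (⋃ i, bad i) < volume (ball (0 : E) 1) := calc
    volume (⋃ i, bad i) ≤ ∑ i, volume (bad i) := measure_iUnion_fintype_le _ _
    _ ≤ ∑ _i : ι, ENNReal.ofReal (2 * ε) * ENNReal.ofReal (unitBallVolume (finrank ℝ E - 1)) :=
      Finset.sum_le_sum fun i _ ↦ volume_abs_inner_lt_mul_norm_inter_ball_le (v i) ε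
    _ = ENNReal.ofReal (Fintype.card ι * (2 * ε) * unitBallVolume (finrank ℝ E - 1)) := by
      rw [Finset.sum_const, Finset.card_univ, nsmul_eq_mul,
        ← ENNReal.ofReal_mul' (unitBallVolume_pos _).le, ← ENNReal.ofReal_natCast,
        ← ENNReal.ofReal_mul (Nat.cast_nonneg _)]
      ring_nf
    _ < ENNReal.ofReal (unitBallVolume (finrank ℝ E)) :=
      (ENNReal.ofReal_lt_ofReal_iff (unitBallVolume_pos _)).2 h
    _ = volume (ball (0 : E) 1) := volume_ball_zero_one.symm
  obtain ⟨g, hg1, hg⟩ := Set.not_subset.1 fun hsub ↦ (measure_mono hsub).not_gt hlt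
  refine ⟨g, mem_ball_zero_iff.1 hg1, fun i ↦ ?_⟩
  by_contra! hi
  exact hg (Set.mem_iUnion.2 ⟨i, by rwa [real_inner_comm] at hi, hg1⟩)

theorem exists_norm_eq_one_forall_mul_norm_le_abs_inner [Nontrivial E] {ι : Type*} [Fintype ι]
    (v : ι → E) {ε : ℝ} (h : Fintype.card ι * (2 * ε) * unitBallVolume (finrank ℝ E - 1) <
      unitBallVolume (finrank ℝ E)) :
    ∃ u : E, ‖u‖ = 1 ∧ ∀ i, ε * ‖v i‖ ≤ |⟪u, v i⟫| := by
  obtain ⟨g, hg1, hg⟩ := exists_norm_lt_one_forall_mul_norm_le_abs_inner v h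
  obtain ⟨u, hu, hgu⟩ := exists_norm_eq_one_abs_inner_le hg1.le
  exact ⟨u, hu, fun i ↦ (hg i).trans (hgu _)⟩

end

lemma Sym2.out_eq_or {α : Type*} (a b : α) : s(a, b).out = (a, b) ∨ s(a, b).out = (b, a) := by
  have h : s(s(a, b).out.1, s(a, b).out.2) = s(a, b) := Quot.out_eq _
  rcases Sym2.eq_iff.1 h with ⟨h1, h2⟩ | ⟨h1, h2⟩
  · exact Or.inl (Prod.ext h1 h2)
  · exact Or.inr (Prod.ext h1 h2)

lemma two_mul_choose_two_le_sq (n : ℕ) : 2 * n.choose 2 ≤ n ^ 2 := by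
  rw [Nat.choose_two_right, sq]
  exact (Nat.mul_div_le _ _).trans (Nat.mul_le_mul_left _ (Nat.sub_le _ _))

theorem exists_unit_vector_separating_general {d : ℕ} (hd : 1 ≤ d)
    (X : Finset (EuclideanSpace ℝ (Fin d))) :
    ∃ u : EuclideanSpace ℝ (Fin d), ‖u‖ = 1 ∧
      ∀ x ∈ X, ∀ x' ∈ X,
        (1 / (X.card : ℝ) ^ 2) * Real.sqrt (8 / (Real.pi * d)) * ‖x - x'‖ ≤
            |(inner ℝ u (x - x') : ℝ)| ∧
          |(inner ℝ u (x - x') : ℝ)| ≤ ‖x - x'‖ := by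
  have : Nonempty (Fin d) := ⟨⟨0, hd⟩⟩
  -- Unordered pairs: `x - x'` and `x' - x` give the same slab, which saves a factor `2`.
  let v (z : {z : Sym2 X // ¬z.IsDiag}) : EuclideanSpace ℝ (Fin d) := z.1.out.1 - z.1.out.2
  set c := √(8 / (π * d))
  have hcard :
      (Fintype.card {z : Sym2 X // ¬z.IsDiag} : ℝ) * (2 * (1 / (X.card : ℝ) ^ 2 * c)) ≤ c :=
    calc _ = ((2 * (X.card.choose 2) : ℕ) : ℝ) / (X.card : ℝ) ^ 2 * c := by
          rw [Sym2.card_subtype_not_diag, Fintype.card_coe]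
          push_cast
          ring
      _ ≤ 1 * c := by
          gcongr
          exact div_le_one_of_le₀ (mod_cast two_mul_choose_two_le_sq _) (by positivity)
      _ = c := one_mul c
  obtain ⟨u, hu, huv⟩ := exists_norm_eq_one_forall_mul_norm_le_abs_inner v
    (ε := 1 / (X.card : ℝ) ^ 2 * c) <| by
      rw [finrank_euclideanSpace_fin]
      exact (mul_le_mul_of_nonneg_right hcard (unitBallVolume_pos _).le).trans_lt
        (sqrt_mul_unitBallVolume_lt hd)
  refine ⟨u, hu, fun x hx x' hx' ↦
    ⟨?_, (abs_real_inner_le_norm u _).trans_eq (by rw [hu, one_mul])⟩⟩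
  rcases eq_or_ne x x' with rfl | hne
  · simp
  have := huv ⟨s(⟨x, hx⟩, ⟨x', hx'⟩), by simpa using hne⟩
  rcases Sym2.out_eq_or (⟨x, hx⟩ : X) ⟨x', hx'⟩ with h | h <;> simp only [v, h] at this
  · exact this
  · rwa [← neg_sub x x', inner_neg_right, abs_neg, norm_neg] at this

/-- for every `d ≥ 1` and every nonempty finite `𝒳 ⊂ ℝ^d` there is a unit
vector `u` such that for all `x, x' ∈ 𝒳`,
`(1/|𝒳|²)·√(8/(πd))·‖x − x'‖ ≤ |⟪u, x − x'⟫| ≤ ‖x − x'‖`. -/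
theorem exists_unit_vector_separating {d : ℕ} (hd : 1 ≤ d)
    (X : Finset (EuclideanSpace ℝ (Fin d))) (hX : X.Nonempty) :
    ∃ u : EuclideanSpace ℝ (Fin d), ‖u‖ = 1 ∧
      ∀ x ∈ X, ∀ x' ∈ X,
        (1 / (X.card : ℝ) ^ 2) * Real.sqrt (8 / (Real.pi * d)) * ‖x - x'‖ ≤
            |(inner ℝ u (x - x') : ℝ)| ∧
          |(inner ℝ u (x - x') : ℝ)| ≤ ‖x - x'‖ :=
  exists_unit_vector_separating_general hd X
end

section
/- Let 𝒱 ⊂ ℝ^d be a finite set such that 0 < γ_min < ‖v‖₂ < γ_max for all v ∈ 𝒱 and ‖v − v′‖₂ > ε for all distinct v, v′ ∈ 𝒱. Then for every δ > 0, every integer s ≥ 1, and every integer ρ with 1 ≤ ρ ≤ min(d, s), there exist matrices W_K, W_Q ∈ ℝ^{s×d} of rank ρ such that |(W_K v_a)^⊤(W_Q v_c) − (W_K v_b)^⊤(W_Q v_c)| > δ for all v_a, v_b, v_c ∈ 𝒱 with v_a ≠ v_b. -/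
/-!
Pick a direction `u` whose dot product with every vocabulary vector and with every difference of
two distinct vocabulary vectors is nonzero, and with `u₀ ≠ 0` (a vector space over an infinite
field is not a finite union of hyperplanes). Let `W_Q` have rows `u, e₁, …, e_{ρ-1}, 0, …, 0` and
let `W_K` be the same matrix with first row `t • u`; `u₀ ≠ 0` makes both of rank `ρ`. Then
`(W_K x)ᵀ(W_Q y) = t (u ⬝ x)(u ⬝ y) + β(x, y)` with `β` independent of `t`, so each of the finitely
many differences to be bounded is an affine function of `t` with nonzero slope
`(u ⬝ (v_a - v_b))(u ⬝ v_c)`, and all of them exceed `δ` in absolute value once `t` is large.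
-/

/-- The Euclidean norm of a vector in `ℝ^d` (viewed as `Fin d → ℝ`). -/
noncomputable def euclNorm {d : ℕ} (v : Fin d → ℝ) : ℝ :=
  Real.sqrt (∑ i, v i ^ 2)

open Matrix Filter

theorem Matrix.exists_dotProduct_ne_zero {K n : Type*} [Field K] [Infinite K] [Fintype n]
    [DecidableEq n] (S : Finset (n → K)) (hS : ∀ w ∈ S, w ≠ 0) :
    ∃ u : n → K, ∀ w ∈ S, u ⬝ᵥ w ≠ 0 := by
  obtain ⟨f, hf⟩ := Module.exists_dual_forall_apply_ne_zero (K := K) ((↑) : S → n → K)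
    fun w => hS w w.2
  refine ⟨(dotProductEquiv K n).symm f, fun w hw => ?_⟩
  have hfw := hf ⟨w, hw⟩
  rw [← (dotProductEquiv K n).apply_symm_apply f] at hfw
  exact hfw

theorem Matrix.exists_separating_dotProduct {K n : Type*} [Field K] [Infinite K] [Fintype n]
    [DecidableEq n] (V : Finset (n → K)) (hV : ∀ v ∈ V, v ≠ 0) (j : n) :
    ∃ u : n → K, u j ≠ 0 ∧ (∀ v ∈ V, u ⬝ᵥ v ≠ 0) ∧
      ∀ a ∈ V, ∀ b ∈ V, a ≠ b → u ⬝ᵥ a ≠ u ⬝ᵥ b := by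
  classical
  obtain ⟨u, hu⟩ := exists_dotProduct_ne_zero
    (insert (Pi.single j 1) (V ∪ V.offDiag.image fun p => p.1 - p.2)) (by
      simp only [Finset.mem_insert, Finset.mem_union, Finset.mem_image, Finset.mem_offDiag]
      rintro w (rfl | hw | ⟨⟨a, b⟩, ⟨-, -, hab⟩, rfl⟩)
      · exact Pi.single_ne_zero_iff.2 one_ne_zero
      · exact hV w hw
      · exact sub_ne_zero.2 hab)
  refine ⟨u, ?_, fun v hv => hu v (Finset.mem_insert_of_mem (Finset.mem_union_left _ hv)),
    fun a ha b hb hab => ?_⟩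
  · simpa [dotProduct_single] using hu _ (Finset.mem_insert_self _ _)
  · rw [← sub_ne_zero, ← dotProduct_sub]
    exact hu _ <| Finset.mem_insert_of_mem <| Finset.mem_union_right _ <|
      Finset.mem_image.2 ⟨(a, b), Finset.mem_offDiag.2 ⟨ha, hb, hab⟩, rfl⟩

theorem Matrix.of_append_zero_mulVec_dotProduct {R n : Type*} [CommSemiring R] [Fintype n]
    {ρ m : ℕ} (b c : Fin ρ → n → R) (x y : n → R) :
    (of (Fin.append b (0 : Fin m → n → R)) *ᵥ x) ⬝ᵥ (of (Fin.append c (0 : Fin m → n → R)) *ᵥ y) =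
      ∑ i, (b i ⬝ᵥ x) * (c i ⬝ᵥ y) := by
  simp [dotProduct, Fin.sum_univ_add, mulVec]

theorem Matrix.rank_of_append_zero {K n : Type*} [Field K] [Fintype n] {ρ m : ℕ}
    {b : Fin ρ → n → K} (hb : LinearIndependent K b) :
    (of (Fin.append b (0 : Fin m → n → K))).rank = ρ := by
  have hspan : Submodule.span K (Set.range (Fin.append b (0 : Fin m → n → K))) =
      Submodule.span K (Set.range b) := by
    refine le_antisymm (Submodule.span_le.2 ?_) (Submodule.span_mono ?_)
    · rintro _ ⟨i, rfl⟩
      induction i using Fin.addCases with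
      | left i => simpa using Submodule.subset_span (Set.mem_range_self i)
      | right i => simp
    · exact Set.range_subset_iff.2 fun i => Set.mem_range.2 ⟨Fin.castAdd m i, by simp⟩
  rw [rank_eq_finrank_span_row]
  change Module.finrank K (Submodule.span K (Set.range (Fin.append b 0))) = ρ
  rw [hspan, finrank_span_eq_card hb, Fintype.card_fin]

theorem linearIndependent_finCons_single {K : Type*} [Field K] {n k : ℕ} (h : k + 1 ≤ n)
    {u : Fin n → K} (hu : u (Fin.castLE h 0) ≠ 0) :
    LinearIndependent K
      (Fin.cons u fun i : Fin k => (Pi.single (Fin.castLE h i.succ) 1 : Fin n → K) :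
        Fin (k + 1) → Fin n → K) := by
  refine linearIndependent_finCons.2 ⟨?_, fun hu_mem => hu ?_⟩
  · exact (Pi.linearIndependent_single_one (Fin n) K).comp _
      ((Fin.castLE_injective h).comp (Fin.succ_injective k))
  · have hle : Submodule.span K
        (Set.range fun i : Fin k => (Pi.single (Fin.castLE h i.succ) 1 : Fin n → K)) ≤
        LinearMap.ker (LinearMap.proj (Fin.castLE h 0)) := by
      refine Submodule.span_le.2 ?_
      rintro _ ⟨i, rfl⟩
      simp [Fin.ext_iff]
    exact hle hu_mem

/-- The `(k + 1 + m) × n` matrix with rows `a, e₁, …, e_k, 0, …, 0`, where `e_i` is the standard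
basis vector at position `i` of `Fin n`. -/
noncomputable def leadRowMatrix {K : Type*} [Field K] {n k : ℕ} (h : k + 1 ≤ n) (m : ℕ)
    (a : Fin n → K) : Matrix (Fin (k + 1 + m)) (Fin n) K :=
  of (Fin.append (Fin.cons a fun i : Fin k => (Pi.single (Fin.castLE h i.succ) 1 : Fin n → K)) 0)

section leadRowMatrix

variable {K : Type*} [Field K] {n k : ℕ} (h : k + 1 ≤ n) (m : ℕ)

theorem rank_leadRowMatrix {a : Fin n → K} (ha : a (Fin.castLE h 0) ≠ 0) :
    (leadRowMatrix h m a).rank = k + 1 :=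
  rank_of_append_zero (linearIndependent_finCons_single h ha)

theorem leadRowMatrix_mulVec_dotProduct (a b x y : Fin n → K) :
    (leadRowMatrix h m a *ᵥ x) ⬝ᵥ (leadRowMatrix h m b *ᵥ y) =
      (a ⬝ᵥ x) * (b ⬝ᵥ y) + ∑ i : Fin k, x (Fin.castLE h i.succ) * y (Fin.castLE h i.succ) := by
  simp [leadRowMatrix, of_append_zero_mulVec_dotProduct, Fin.sum_univ_succ]

end leadRowMatrix

theorem eventually_lt_abs_mul_add {α : ℝ} (hα : α ≠ 0) (β δ : ℝ) :
    ∀ᶠ t in atTop, δ < |t * α + β| := by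
  have hlin : Tendsto (fun t => t * |α| - |β|) atTop atTop :=
    tendsto_atTop_add_const_right _ _ (tendsto_id.atTop_mul_const (abs_pos.2 hα))
  filter_upwards [hlin.eventually_gt_atTop δ, eventually_ge_atTop 0] with t hδ ht
  calc δ < t * |α| - |β| := hδ
    _ = |t * α| - |-β| := by rw [abs_mul, abs_of_nonneg ht, abs_neg]
    _ ≤ |t * α - -β| := abs_sub_abs_le_abs_sub _ _
    _ = |t * α + β| := by rw [sub_neg_eq_add]

theorem ne_zero_of_lt_euclNorm {d : ℕ} {γ : ℝ} (hγ : 0 ≤ γ) {v : Fin d → ℝ}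
    (hv : γ < euclNorm v) : v ≠ 0 := by
  rintro rfl
  simp [euclNorm] at hv
  linarith

theorem exists_rank_rho_weights_general {d : ℕ} (V : Finset (Fin d → ℝ))
    (γmin γmax : ℝ) (hγmin : 0 < γmin)
    (hnorm : ∀ v ∈ V, γmin < euclNorm v ∧ euclNorm v < γmax)
    (δ : ℝ) (s : ℕ)
    (ρ : ℕ) (hρ1 : 1 ≤ ρ) (hρ2 : ρ ≤ min d s) :
    ∃ WK WQ : Matrix (Fin s) (Fin d) ℝ, WK.rank = ρ ∧ WQ.rank = ρ ∧
      ∀ va ∈ V, ∀ vb ∈ V, ∀ vc ∈ V, va ≠ vb →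
        |(∑ t, WK.mulVec va t * WQ.mulVec vc t) -
            (∑ t, WK.mulVec vb t * WQ.mulVec vc t)| > δ := by
  obtain ⟨k, rfl⟩ : ∃ k, ρ = k + 1 := ⟨ρ - 1, by omega⟩
  obtain ⟨m, rfl⟩ := Nat.exists_eq_add_of_le (hρ2.trans (min_le_right _ _))
  have hkd : k + 1 ≤ d := hρ2.trans (min_le_left _ _)
  obtain ⟨u, hu₀, huV, hu_inj⟩ := exists_separating_dotProduct V
    (fun v hv => ne_zero_of_lt_euclNorm hγmin.le (hnorm v hv).1) (Fin.castLE hkd 0)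
  set W : ℝ → Matrix (Fin (k + 1 + m)) (Fin d) ℝ := fun t => leadRowMatrix hkd m (t • u)
  have hW_rank (t : ℝ) (ht : t ≠ 0) : (W t).rank = k + 1 :=
    rank_leadRowMatrix hkd m (by simpa using mul_ne_zero ht hu₀)
  set β : (Fin d → ℝ) → (Fin d → ℝ) → ℝ :=
    fun x y => ∑ i : Fin k, x (Fin.castLE hkd i.succ) * y (Fin.castLE hkd i.succ)
  have hlarge : ∀ᶠ t in atTop, t ≠ 0 ∧ ∀ va ∈ V, ∀ vb ∈ V, ∀ vc ∈ V, va ≠ vb →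
      δ < |t * ((u ⬝ᵥ va - u ⬝ᵥ vb) * (u ⬝ᵥ vc)) + (β va vc - β vb vc)| := by
    refine (eventually_ne_atTop 0).and ?_
    simp only [eventually_all_finset, eventually_imp_distrib_left]
    intro va ha vb hb vc hc hab
    exact eventually_lt_abs_mul_add
      (mul_ne_zero (sub_ne_zero.2 (hu_inj va ha vb hb hab)) (huV vc hc)) _ _
  obtain ⟨t, ht₀, ht⟩ := hlarge.exists
  refine ⟨W t, W 1, hW_rank t ht₀, hW_rank 1 one_ne_zero, fun va ha vb hb vc hc hab => ?_⟩
  change δ < |(W t *ᵥ va) ⬝ᵥ (W 1 *ᵥ vc) - (W t *ᵥ vb) ⬝ᵥ (W 1 *ᵥ vc)|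
  convert ht va ha vb hb vc hc hab using 2
  simp only [W, β, leadRowMatrix_mulVec_dotProduct, smul_dotProduct, one_smul, smul_eq_mul]
  ring

/-- given a finite vocabulary `𝒱 ⊂ ℝ^d` with `0 < γ_min < ‖v‖ < γ_max` and
pairwise separation `‖v − v'‖ > ε`, for every `δ > 0`, `s ≥ 1` and `1 ≤ ρ ≤ min(d, s)`
there exist rank-`ρ` matrices `W_K, W_Q ∈ ℝ^{s×d}` with
`|(W_K v_a)ᵀ(W_Q v_c) − (W_K v_b)ᵀ(W_Q v_c)| > δ` for all `v_a ≠ v_b`, `v_c` in `𝒱`. -/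
theorem exists_rank_rho_weights {d : ℕ} (V : Finset (Fin d → ℝ))
    (γmin γmax ε : ℝ) (hγmin : 0 < γmin) (hγ : γmin < γmax)
    (hnorm : ∀ v ∈ V, γmin < euclNorm v ∧ euclNorm v < γmax)
    (hsep : ∀ v ∈ V, ∀ v' ∈ V, v ≠ v' → euclNorm (v - v') > ε)
    (δ : ℝ) (hδ : 0 < δ) (s : ℕ) (hs : 1 ≤ s)
    (ρ : ℕ) (hρ1 : 1 ≤ ρ) (hρ2 : ρ ≤ min d s) :
    ∃ WK WQ : Matrix (Fin s) (Fin d) ℝ, WK.rank = ρ ∧ WQ.rank = ρ ∧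
      ∀ va ∈ V, ∀ vb ∈ V, ∀ vc ∈ V, va ≠ vb →
        |(∑ t, WK.mulVec va t * WQ.mulVec vc t) -
            (∑ t, WK.mulVec vb t * WQ.mulVec vc t)| > δ :=
  exists_rank_rho_weights_general V γmin γmax hγmin hnorm δ s ρ hρ1 hρ2
end

section
/- Fix integers d, L, L_p ≥ 1 and δ ∈ (0,1) with 1/δ an integer. For every function h: [0,1]^{d×(L_p+L)} → G_{δ,(L_p+L)} that is constant on each quantization cell, there exists a transformer τ in the class 𝒯_A^{1,1,4} on sequences of length L_p+L (i.e. a composition of finitely many width-4 feed-forward layers, one single-head hidden-size-1 self-attention layer with residual connection, and finitely many width-4 feed-forward layers, applied after adding the positional encoding E with E_{i,j} = j−1) such that τ([P, X])_{:,L_p:} = h([P, X])_{:,L_p:} for every P ∈ G_{δ,L_p} and every X ∈ [0,1)^{d×L}. -/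
/-- Columnwise softmax of a vector `a ∈ ℝ^L`. -/
noncomputable def smax {L : ℕ} (a : Fin L → ℝ) : Fin L → ℝ :=
  fun i => Real.exp (a i) / ∑ j, Real.exp (a j)

/-- Matrix–vector product for matrices viewed as `Fin a → Fin b → ℝ`. -/
def mvec {a b : ℕ} (W : Fin a → Fin b → ℝ) (v : Fin b → ℝ) : Fin a → ℝ :=
  fun i => ∑ j, W i j * v j

/-- The `k`-th column of a `d × n` array. -/
def column {d n : ℕ} (Z : Fin d → Fin n → ℝ) (k : Fin n) : Fin d → ℝ :=
  fun i => Z i k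

/-- Single-head self-attention with residual connection:
`f^{SA}(Z)_{:,k} = Z_{:,k} + W_O (W_V Z) softmax[(W_K Z)ᵀ (W_Q Z_{:,k})]`. -/
noncomputable def saLayer {d s n : ℕ} (WO : Fin d → Fin s → ℝ)
    (WV WK WQ : Fin s → Fin d → ℝ) (Z : Fin d → Fin n → ℝ) : Fin d → Fin n → ℝ :=
  fun i k => Z i k +
    mvec WO (fun t => ∑ l,
      mvec WV (column Z l) t *
        smax (fun l' => ∑ t', mvec WK (column Z l') t' * mvec WQ (column Z k) t') l) i

/-- Tokenwise feed-forward layer with residual connection: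
`f^{FF}(Z)_{:,k} = Z_{:,k} + W^{(2)} φ(W^{(1)} Z_{:,k} + b^{(1)}) + b^{(2)}`. -/
noncomputable def ffLayer {d n r : ℕ} (φ : ℝ → ℝ) (W1 : Fin r → Fin d → ℝ)
    (W2 : Fin d → Fin r → ℝ) (b1 : Fin r → ℝ) (b2 : Fin d → ℝ)
    (Z : Fin d → Fin n → ℝ) : Fin d → Fin n → ℝ :=
  fun i k => Z i k + mvec W2 (fun j => φ (mvec W1 (column Z k) j + b1 j)) i + b2 i

/-- A piecewise-linear activation with at most three pieces, at least one constant. -/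
def PL3 (φ : ℝ → ℝ) : Prop :=
  ∃ t₁ t₂ a₁ c₁ a₂ c₂ a₃ c₃ : ℝ, t₁ ≤ t₂ ∧ (a₁ = 0 ∨ a₂ = 0 ∨ a₃ = 0) ∧
    (∀ x, x < t₁ → φ x = a₁ * x + c₁) ∧
    (∀ x, t₁ ≤ x → x < t₂ → φ x = a₂ * x + c₂) ∧
    (∀ x, t₂ ≤ x → φ x = a₃ * x + c₃)

/-- A width-4 feed-forward layer with admissible piecewise-linear activation. -/
def IsFF4 {d n : ℕ} (f : (Fin d → Fin n → ℝ) → Fin d → Fin n → ℝ) : Prop :=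
  ∃ (φ : ℝ → ℝ) (W1 : Fin 4 → Fin d → ℝ) (W2 : Fin d → Fin 4 → ℝ)
    (b1 : Fin 4 → ℝ) (b2 : Fin d → ℝ),
      PL3 φ ∧ f = ffLayer φ W1 W2 b1 b2

/-- A single-head hidden-size-1 self-attention layer. -/
def IsSA1 {d n : ℕ} (f : (Fin d → Fin n → ℝ) → Fin d → Fin n → ℝ) : Prop :=
  ∃ (WO : Fin d → Fin 1 → ℝ) (WV WK WQ : Fin 1 → Fin d → ℝ), f = saLayer WO WV WK WQ

/-- Adding the positional encoding `E` with `E_{i,j} = j − 1` (0-indexed: `E_{i,j} = j`). -/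
def addPE {d n : ℕ} (Z : Fin d → Fin n → ℝ) : Fin d → Fin n → ℝ :=
  fun i j => Z i j + (j : ℝ)

/-- Composition of a list of layers. -/
def composeList {β : Type*} (l : List (β → β)) : β → β :=
  l.foldr (· ∘ ·) id

/-- The transformer class `𝒯_A^{1,1,4}`: finitely many width-4 feed-forward layers, one
single-head hidden-size-1 self-attention layer, finitely many width-4 feed-forward
layers, applied after adding the positional encoding. -/
def InTA {d n : ℕ} (τ : (Fin d → Fin n → ℝ) → Fin d → Fin n → ℝ) : Prop :=
  ∃ (fs gs : List ((Fin d → Fin n → ℝ) → Fin d → Fin n → ℝ))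
    (sa : (Fin d → Fin n → ℝ) → Fin d → Fin n → ℝ),
      (∀ f ∈ fs, IsFF4 f) ∧ (∀ g ∈ gs, IsFF4 g) ∧ IsSA1 sa ∧
      τ = fun Z => composeList fs (sa (composeList gs (addPE Z)))

/-- The unit cube `[0,1]^{d×m}`. -/
def cube (d m : ℕ) : Set (Fin d → Fin m → ℝ) :=
  {X | ∀ i j, X i j ∈ Set.Icc (0 : ℝ) 1}

/-- Membership in the grid `G_{δ,m} = {0, δ, 2δ, …, 1−δ}^{d×m}`. -/
def inGrid {d m : ℕ} (δ : ℝ) (M : Fin d → Fin m → ℝ) : Prop :=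
  ∀ i j, ∃ k : ℕ, M i j = (k : ℝ) * δ ∧ (k : ℝ) * δ ≤ 1 - δ

/-- Column concatenation `[P, X]` of `P ∈ ℝ^{d×L_p}` and `X ∈ ℝ^{d×L}`. -/
def concat {d Lp L : ℕ} (P : Fin d → Fin Lp → ℝ) (X : Fin d → Fin L → ℝ) :
    Fin d → Fin (Lp + L) → ℝ :=
  fun i j =>
    if h : (j : ℕ) < Lp then P i ⟨j, h⟩
    else X i ⟨(j : ℕ) - Lp, by have := j.isLt; omega⟩

/-- The last `L` columns `M_{:,L_p:}` of `M ∈ ℝ^{d×(L_p+L)}`. -/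
def lastCols {d : ℕ} (Lp L : ℕ) (M : Fin d → Fin (Lp + L) → ℝ) :
    Fin d → Fin L → ℝ :=
  fun i j => M i ⟨Lp + (j : ℕ), by have := j.isLt; omega⟩

/-!
Write `μ i k = ⌊A i k * q⌋` for the quantization cell of an entry. After the positional
encoding, `A i k + k` lies in cell `k q + μ i k` of the grid of mesh `1/q`. A feed-forward layer
with one hidden unit can replace a single cell by a constant `v`: its activation is `x ↦ v - x`
on the cell and `0` elsewhere, three pieces, two of them constant. A stack of such layers
therefore rewrites each entry `(i, k)` into the natural number
`(2q)^(nd) (k + n) + (2q)^(dk + i) μ i k`. An attention layer with zero queries and keys adds up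
all entries, turning entry `(i, k)` into a code from which both `k` and the whole matrix `μ` can
be read off. A second stack of cell-replacement layers sends every code to the prescribed
output. Since `h` is constant on quantization cells, this output is `h` itself.
-/

open Finset

section Layers

variable {d n : ℕ}

def rowMap (G : Fin d → ℝ → ℝ) (Z : Fin d → Fin n → ℝ) : Fin d → Fin n → ℝ :=
  fun i k => G i (Z i k)

def coordMap (i₀ : Fin d) (g : ℝ → ℝ) :
    (Fin d → Fin n → ℝ) → Fin d → Fin n → ℝ :=
  rowMap fun i => if i = i₀ then g else id

lemma coordMap_comp (i₀ : Fin d) (g g' : ℝ → ℝ) :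
    coordMap (n := n) i₀ (g ∘ g') = coordMap i₀ g ∘ coordMap i₀ g' := by
  funext Z i k
  by_cases h : i = i₀ <;> simp [coordMap, rowMap, h]

lemma coordMap_id (i₀ : Fin d) : coordMap (n := n) i₀ id = id := by
  funext Z i k
  by_cases h : i = i₀ <;> simp [coordMap, rowMap, h]

lemma composeList_append {β : Type*} (l₁ l₂ : List (β → β)) :
    composeList (l₁ ++ l₂) = composeList l₁ ∘ composeList l₂ := by
  induction l₁ with
  | nil => rfl
  | cons f l ih =>
    simp only [composeList, List.cons_append, List.foldr_cons] at ih ⊢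
    rw [ih, Function.comp_assoc]

def IsFFStack (f : (Fin d → Fin n → ℝ) → Fin d → Fin n → ℝ) : Prop :=
  ∃ fs : List ((Fin d → Fin n → ℝ) → Fin d → Fin n → ℝ),
    (∀ g ∈ fs, IsFF4 g) ∧ f = composeList fs

lemma isFFStack_id : IsFFStack (id : (Fin d → Fin n → ℝ) → Fin d → Fin n → ℝ) :=
  ⟨[], by simp, rfl⟩

lemma IsFF4.isFFStack {f : (Fin d → Fin n → ℝ) → Fin d → Fin n → ℝ} (hf : IsFF4 f) :
    IsFFStack f :=
  ⟨[f], by simpa using hf, rfl⟩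

lemma IsFFStack.comp {f g : (Fin d → Fin n → ℝ) → Fin d → Fin n → ℝ}
    (hf : IsFFStack f) (hg : IsFFStack g) : IsFFStack (f ∘ g) := by
  obtain ⟨fs, hfs, rfl⟩ := hf
  obtain ⟨gs, hgs, rfl⟩ := hg
  refine ⟨fs ++ gs, fun u hu => ?_, (composeList_append fs gs).symm⟩
  rcases List.mem_append.mp hu with hu | hu
  exacts [hfs u hu, hgs u hu]

lemma inTA_of_isFFStack {f g sa : (Fin d → Fin n → ℝ) → Fin d → Fin n → ℝ}
    (hf : IsFFStack f) (hsa : IsSA1 sa) (hg : IsFFStack g) :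
    InTA fun Z => f (sa (g (addPE Z))) := by
  obtain ⟨fs, hfs, rfl⟩ := hf
  obtain ⟨gs, hgs, rfl⟩ := hg
  exact ⟨fs, gs, sa, hfs, hgs, hsa, rfl⟩

lemma isFFStack_rowMap {G : Fin d → ℝ → ℝ}
    (hG : ∀ i, IsFFStack (coordMap (n := n) i (G i))) : IsFFStack (rowMap (n := n) G) := by
  classical
  suffices ∀ s : Finset (Fin d),
      IsFFStack (rowMap (n := n) fun i => if i ∈ s then G i else id) by
    simpa using this univ
  intro s
  induction s using Finset.induction_on with
  | empty => exact isFFStack_id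
  | insert a s ha ih =>
    convert (hG a).comp ih using 1
    funext Z i k
    by_cases hi : i = a
    · subst hi; simp [rowMap, coordMap, ha]
    · simp [rowMap, coordMap, hi]

lemma isFF4_coordMap_add {φ : ℝ → ℝ} (hφ : PL3 φ) (i₀ : Fin d) :
    IsFF4 (coordMap (n := n) i₀ fun y => y + φ y) := by
  refine ⟨φ, fun _ x => if x = i₀ then 1 else 0,
    fun i u => if i = i₀ ∧ u = 0 then 1 else 0, 0, 0, hφ, ?_⟩
  funext Z i k
  by_cases hi : i = i₀
  · subst hi; simp [ffLayer, coordMap, rowMap, mvec, column, ite_mul]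
  · simp [ffLayer, coordMap, rowMap, mvec, column, hi]

end Layers

noncomputable section Lookup

def patch (s : ℝ) (c : ℤ) (v y : ℝ) : ℝ := if ⌊y * s⌋ = c then v else y

lemma pl3_ite_floor_eq_sub {s : ℝ} (hs : 0 < s) (c : ℤ) (v : ℝ) :
    PL3 fun x => if ⌊x * s⌋ = c then v - x else 0 := by
  refine ⟨c / s, (c + 1) / s, 0, 0, -1, v, 0, 0,
    div_le_div_of_nonneg_right (by linarith) hs.le, Or.inl rfl, fun x hx => ?_,
    fun x hx₁ hx₂ => ?_, fun x hx => ?_⟩ <;> dsimp only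
  · rw [lt_div_iff₀ hs] at hx
    rw [if_neg fun h => by linarith [Int.floor_le (x * s), congrArg ((↑) : ℤ → ℝ) h]]
    ring
  · rw [div_le_iff₀ hs] at hx₁
    rw [lt_div_iff₀ hs] at hx₂
    rw [if_pos (Int.floor_eq_iff.mpr ⟨hx₁, hx₂⟩)]
    ring
  · rw [div_le_iff₀ hs] at hx
    rw [if_neg fun h => by
      linarith [Int.lt_floor_add_one (x * s), congrArg ((↑) : ℤ → ℝ) h]]
    ring

lemma isFF4_coordMap_patch {d n : ℕ} {s : ℝ} (hs : 0 < s) (c : ℤ) (v : ℝ) (i₀ : Fin d) :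
    IsFF4 (coordMap (n := n) i₀ (patch s c v)) := by
  convert isFF4_coordMap_add (pl3_ite_floor_eq_sub hs c v) i₀ using 3 with y
  unfold patch
  split_ifs <;> ring

variable {ι : Type*} (s : ℝ) (c : ι → ℤ) (v : ι → ℝ)

def lookup (l : List ι) : ℝ → ℝ :=
  l.foldr (fun j g => patch s (c j) (v j) ∘ g) id

lemma lookup_cons (j : ι) (l : List ι) :
    lookup s c v (j :: l) = patch s (c j) (v j) ∘ lookup s c v l :=
  rfl

variable {s c v}

lemma lookup_of_forall_ne {l : List ι} {y : ℝ} (hy : ∀ j ∈ l, ⌊y * s⌋ ≠ c j) :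
    lookup s c v l y = y := by
  induction l with
  | nil => rfl
  | cons j l ih =>
    simp only [List.mem_cons, forall_eq_or_imp] at hy
    rw [lookup_cons, Function.comp_apply, ih hy.2, patch, if_neg hy.1]

/-- Since the values avoid every cell, a patched value is left alone by all later patches. -/
lemma lookup_of_floor_eq (hc : Function.Injective c) (hv : ∀ j j', ⌊v j * s⌋ ≠ c j')
    {l : List ι} {j : ι} (hj : j ∈ l) {y : ℝ} (hy : ⌊y * s⌋ = c j) :
    lookup s c v l y = v j := by
  induction l with
  | nil => simp at hj
  | cons j' l ih =>
    rw [lookup_cons, Function.comp_apply]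
    by_cases hjl : j ∈ l
    · rw [ih hjl, patch, if_neg (hv j j')]
    · obtain rfl : j = j' := by simpa [hjl] using hj
      have hy' : ∀ j' ∈ l, ⌊y * s⌋ ≠ c j' := fun j' hj' h =>
        hjl (hc (hy.symm.trans h) ▸ hj')
      rw [lookup_of_forall_ne hy', patch, if_pos hy]

lemma isFFStack_coordMap_lookup {d n : ℕ} (hs : 0 < s) (l : List ι) (i₀ : Fin d) :
    IsFFStack (coordMap (n := n) i₀ (lookup s c v l)) := by
  induction l with
  | nil => exact (coordMap_id i₀).symm ▸ isFFStack_id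
  | cons j l ih =>
    rw [lookup_cons, coordMap_comp]
    exact (isFF4_coordMap_patch hs _ _ i₀).isFFStack.comp ih

end Lookup

/-- With zero queries and keys the attention weights are uniform, `1/n`; value weight `n`
turns the average into a sum. -/
lemma saLayer_uniform {d n : ℕ} (Z : Fin d → Fin n → ℝ) :
    saLayer (fun (_ : Fin d) (_ : Fin 1) => 1) (fun _ _ => (n : ℝ)) (fun _ _ => 0)
      (fun _ _ => 0) Z = fun i k => Z i k + ∑ l, ∑ i', Z i' l := by
  funext i k
  have hn : (n : ℝ) ≠ 0 := Nat.cast_ne_zero.mpr k.pos.ne'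
  simp only [saLayer, mvec, column, smax, zero_mul, sum_const_zero, Real.exp_zero, one_mul,
    sum_const, card_univ, Fintype.card_fin, nsmul_eq_mul, mul_one, Nat.cast_one, ← mul_sum]
  field_simp

section Digits

variable {ι : Type*} [Fintype ι] {b m : ℕ} (e : ι ≃ Fin m)

lemma sum_mul_pow_eq_finFunctionFinEquiv {a : ι → ℕ} (ha : ∀ p, a p < b) :
    ∑ p, a p * b ^ (e p : ℕ) =
      finFunctionFinEquiv fun j => (⟨a (e.symm j), ha _⟩ : Fin b) := by
  rw [finFunctionFinEquiv_apply, ← e.sum_comp]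
  simp

lemma sum_mul_pow_lt {a : ι → ℕ} (ha : ∀ p, a p < b) :
    ∑ p, a p * b ^ (e p : ℕ) < b ^ m := by
  rw [sum_mul_pow_eq_finFunctionFinEquiv e ha]
  exact Fin.isLt _

lemma sum_mul_pow_injective {a a' : ι → ℕ} (ha : ∀ p, a p < b) (ha' : ∀ p, a' p < b)
    (h : ∑ p, a p * b ^ (e p : ℕ) = ∑ p, a' p * b ^ (e p : ℕ)) : a = a' := by
  rw [sum_mul_pow_eq_finFunctionFinEquiv e ha, sum_mul_pow_eq_finFunctionFinEquiv e ha'] at h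
  funext p
  simpa using congrFun (finFunctionFinEquiv.injective (Fin.ext h)) (e p)

end Digits

section Code

variable {d n : ℕ} (q : ℕ)

def tokenCode (p : Fin n × Fin d) (m : ℕ) : ℕ :=
  (2 * q) ^ (n * d) * (p.1 + n) + (2 * q) ^ (finProdFinEquiv p : ℕ) * m

def code (i : Fin d) (k : Fin n) (μ : Fin d → Fin n → Fin q) : ℕ :=
  tokenCode q (k, i) (μ i k) + ∑ l, ∑ i', tokenCode q (l, i') (μ i' l)

/-- The own entry occurs twice, hence base `2q`. -/
def codeDigit (i : Fin d) (k : Fin n) (μ : Fin d → Fin n → Fin q) (p : Fin n × Fin d) : ℕ :=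
  (if p = (k, i) then 2 else 1) * μ p.2 p.1

lemma codeDigit_lt (i : Fin d) (k : Fin n) (μ : Fin d → Fin n → Fin q) (p : Fin n × Fin d) :
    codeDigit q i k μ p < 2 * q := by
  have := (μ p.2 p.1).isLt
  unfold codeDigit
  split_ifs <;> omega

lemma code_eq_block_add_digits (i : Fin d) (k : Fin n) (μ : Fin d → Fin n → Fin q) :
    code q i k μ = (2 * q) ^ (n * d) * (k + n + ∑ p : Fin n × Fin d, (p.1 + n)) +
      ∑ p, codeDigit q i k μ p * (2 * q) ^ (finProdFinEquiv p : ℕ) := by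
  have hdigit : ∀ p : Fin n × Fin d,
      codeDigit q i k μ p * (2 * q) ^ (finProdFinEquiv p : ℕ) =
        (2 * q) ^ (finProdFinEquiv p : ℕ) * μ p.2 p.1 +
          if p = (k, i) then (2 * q) ^ (finProdFinEquiv (k, i) : ℕ) * μ i k else 0 := by
    intro p
    unfold codeDigit
    split_ifs with hp
    · subst hp; ring
    · ring
  simp only [code, tokenCode, hdigit, sum_add_distrib, sum_ite_eq', mem_univ, if_true,
    ← Fintype.sum_prod_type', mul_add, mul_sum, Prod.mk.eta]
  ring

lemma code_injective (hq : 0 < q) (i : Fin d) :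
    Function.Injective fun p : Fin n × (Fin d → Fin n → Fin q) => code q i p.1 p.2 := by
  rintro ⟨k, μ⟩ ⟨k', μ'⟩ h
  simp only [code_eq_block_add_digits] at h
  have hW : 0 < (2 * q) ^ (n * d) := by positivity
  have hR := sum_mul_pow_lt finProdFinEquiv (codeDigit_lt q i k μ)
  have hR' := sum_mul_pow_lt finProdFinEquiv (codeDigit_lt q i k' μ')
  have hhigh := congrArg (· / (2 * q) ^ (n * d)) h
  have hlow := congrArg (· % (2 * q) ^ (n * d)) h
  simp only [Nat.mul_add_div hW, Nat.div_eq_of_lt hR, Nat.div_eq_of_lt hR', Nat.mul_add_mod,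
    Nat.mod_eq_of_lt hR, Nat.mod_eq_of_lt hR'] at hhigh hlow
  obtain rfl : k = k' := Fin.ext (by omega)
  have hdigits := sum_mul_pow_injective finProdFinEquiv (codeDigit_lt q i k μ)
    (codeDigit_lt q i k μ') hlow
  obtain rfl : μ = μ' := by
    funext i' l
    have := congrFun hdigits (l, i')
    unfold codeDigit at this
    exact Fin.ext (Nat.eq_of_mul_eq_mul_left (by split_ifs <;> omega) this)
  rfl

lemma le_tokenCode (hq : 0 < q) (p : Fin n × Fin d) (m : ℕ) : n ≤ tokenCode q p m := by
  have hW : 1 ≤ (2 * q) ^ (n * d) := Nat.one_le_pow _ _ (by omega)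
  unfold tokenCode
  nlinarith [Nat.zero_le ((2 * q) ^ (finProdFinEquiv p : ℕ) * m), Nat.zero_le (p.1 : ℕ)]

end Code

noncomputable section Construction

variable {d : ℕ} (q : ℕ)

def encodeRow (n : ℕ) (i : Fin d) : ℝ → ℝ :=
  lookup (q : ℝ) (fun p : Fin n × Fin q => ((finProdFinEquiv p : ℕ) : ℤ))
    (fun p => (tokenCode q (p.1, i) p.2 : ℝ)) univ.toList

def decodeRow {n : ℕ} (F : (Fin d → Fin n → Fin q) → Fin d → Fin n → ℝ) (i : Fin d) :
    ℝ → ℝ :=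
  lookup 1 (fun p : Fin n × (Fin d → Fin n → Fin q) => (code q i p.1 p.2 : ℤ))
    (fun p => F p.2 i p.1) univ.toList

variable {q} {n : ℕ}

lemma encodeRow_add_natCast (hq : 0 < q) (i : Fin d) (k : Fin n) {y : ℝ} {m : Fin q}
    (hy : ⌊y * q⌋ = m) : encodeRow q n i (y + k) = tokenCode q (k, i) m := by
  refine lookup_of_floor_eq ?_ (fun p p' => ?_) (mem_toList.mpr (mem_univ (k, m))) ?_
  · exact Nat.cast_injective.comp (Fin.val_injective.comp finProdFinEquiv.injective)
  · have hcell := (finProdFinEquiv p').isLt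
    have hcode := Nat.mul_le_mul_right q (le_tokenCode q hq (p.1, i) p.2)
    rw [← Nat.cast_mul, Int.floor_natCast]
    exact_mod_cast (hcell.trans_le hcode).ne'
  · rw [add_mul, ← Nat.cast_mul, Int.floor_add_natCast, hy, finProdFinEquiv_apply_val]
    push_cast
    ring

lemma decodeRow_code (hq : 0 < q) {F : (Fin d → Fin n → Fin q) → Fin d → Fin n → ℝ}
    (hF : ∀ μ i k, F μ i k < 1) (i : Fin d) (k : Fin n) (μ : Fin d → Fin n → Fin q) :
    decodeRow q F i (code q i k μ) = F μ i k := by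
  refine lookup_of_floor_eq (j := (k, μ)) (Nat.cast_injective.comp (code_injective q hq i))
    (fun p p' => ?_) (mem_toList.mpr (mem_univ _)) (by simp)
  have hcode : 1 ≤ code q i p'.1 p'.2 :=
    (p'.1.pos.trans_le (le_tokenCode q hq _ _)).trans_le (Nat.le_add_right _ _)
  have : ⌊F p.2 i p.1 * 1⌋ < 1 := Int.floor_lt.mpr (by simpa using hF p.2 i p.1)
  simp only [Function.comp_apply]
  omega

theorem exists_inTA_eq_of_floor_eq (hq : 0 < q)
    (F : (Fin d → Fin n → Fin q) → Fin d → Fin n → ℝ) (hF : ∀ μ i k, F μ i k < 1) :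
    ∃ τ, InTA τ ∧ ∀ (A : Fin d → Fin n → ℝ) (μ : Fin d → Fin n → Fin q),
      (∀ i k, ⌊A i k * q⌋ = μ i k) → τ A = F μ := by
  refine ⟨fun Z => rowMap (decodeRow q F) (saLayer (fun (_ : Fin d) (_ : Fin 1) => 1)
      (fun _ _ => (n : ℝ)) (fun _ _ => 0) (fun _ _ => 0) (rowMap (encodeRow q n) (addPE Z))),
    inTA_of_isFFStack (isFFStack_rowMap fun i => isFFStack_coordMap_lookup one_pos _ i)
      ⟨_, _, _, _, rfl⟩
      (isFFStack_rowMap fun i => isFFStack_coordMap_lookup (Nat.cast_pos.mpr hq) _ i),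
    fun A μ hA => ?_⟩
  have hencode :
      rowMap (encodeRow q n) (addPE A) = fun i k => (tokenCode q (k, i) (μ i k) : ℝ) := by
    funext i k
    exact encodeRow_add_natCast hq i k (hA i k)
  funext i k
  simp only [hencode, saLayer_uniform, rowMap]
  rw [← decodeRow_code hq hF i k μ, code]
  push_cast
  rfl

end Construction

lemma inGrid.mem_Ico {d m : ℕ} {δ : ℝ} (hδ : 0 < δ) {M : Fin d → Fin m → ℝ}
    (hM : inGrid δ M) (i : Fin d) (j : Fin m) : M i j ∈ Set.Ico 0 1 := by
  obtain ⟨k, hk, hkδ⟩ := hM i j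
  rw [hk]
  exact ⟨by positivity, by linarith⟩

lemma concat_mem_Ico {d Lp L : ℕ} {P : Fin d → Fin Lp → ℝ} {X : Fin d → Fin L → ℝ}
    (hP : ∀ i j, P i j ∈ Set.Ico 0 1) (hX : ∀ i j, X i j ∈ Set.Ico 0 1) (i : Fin d)
    (j : Fin (Lp + L)) : concat P X i j ∈ Set.Ico 0 1 := by
  unfold concat
  split
  exacts [hP _ _, hX _ _]

lemma exists_floor_mul_eq {d n q : ℕ} (hq : 0 < q) {A : Fin d → Fin n → ℝ}
    (hA : ∀ i k, A i k ∈ Set.Ico 0 1) :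
    ∃ μ : Fin d → Fin n → Fin q, ∀ i k, ⌊A i k * q⌋ = μ i k := by
  have hq' : (0 : ℝ) < q := Nat.cast_pos.mpr hq
  have hAq : ∀ i k, 0 ≤ A i k * q := fun i k => mul_nonneg (hA i k).1 hq'.le
  refine ⟨fun i k => ⟨⌊A i k * q⌋₊, (Nat.floor_lt (hAq i k)).mpr ?_⟩,
    fun i k => (Int.natCast_floor_eq_floor (hAq i k)).symm⟩
  nlinarith [(hA i k).2]

lemma natCast_mul_inv_mem_Icc {q : ℕ} (m : Fin q) :
    (m : ℝ) * (q : ℝ)⁻¹ ∈ Set.Icc 0 1 := by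
  have hq : (0 : ℝ) < q := Nat.cast_pos.mpr m.pos
  refine ⟨by positivity, ?_⟩
  rw [← div_eq_mul_inv, div_le_one hq]
  exact_mod_cast m.isLt.le

theorem transformer_realizes_quantized_map_general (d L Lp : ℕ) (δ : ℝ)
    (hδint : ∃ q : ℕ, (q : ℝ) * δ = 1)
    (h : (Fin d → Fin (Lp + L) → ℝ) → Fin d → Fin (Lp + L) → ℝ)
    (hgrid : ∀ X ∈ cube d (Lp + L), inGrid δ (h X))
    (hcell : ∀ X ∈ cube d (Lp + L), ∀ Y ∈ cube d (Lp + L),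
      (∀ i j, ⌊X i j / δ⌋ = ⌊Y i j / δ⌋) → h X = h Y) :
    ∃ τ : (Fin d → Fin (Lp + L) → ℝ) → Fin d → Fin (Lp + L) → ℝ,
      InTA τ ∧
      ∀ (P : Fin d → Fin Lp → ℝ) (X : Fin d → Fin L → ℝ),
        inGrid δ P → (∀ i j, X i j ∈ Set.Ico (0 : ℝ) 1) →
        lastCols Lp L (τ (concat P X)) = lastCols Lp L (h (concat P X)) := by
  obtain ⟨q, hqδ⟩ := hδint
  have hq : 0 < q := Nat.pos_of_ne_zero fun hq => by simp [hq] at hqδ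
  obtain rfl : δ = (q : ℝ)⁻¹ := eq_inv_of_mul_eq_one_right hqδ
  have hqR : (0 : ℝ) < q := Nat.cast_pos.mpr hq
  have hδ : (0 : ℝ) < (q : ℝ)⁻¹ := inv_pos.mpr hqR
  set grid : (Fin d → Fin (Lp + L) → Fin q) → Fin d → Fin (Lp + L) → ℝ :=
    fun μ i k => μ i k * (q : ℝ)⁻¹
  have hgrid_cube : ∀ μ, grid μ ∈ cube d (Lp + L) := fun μ i k => natCast_mul_inv_mem_Icc _
  obtain ⟨τ, hτ, hτh⟩ := exists_inTA_eq_of_floor_eq hq (h ∘ grid)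
    fun μ i k => ((hgrid _ (hgrid_cube μ)).mem_Ico hδ i k).2
  refine ⟨τ, hτ, fun P X hP hX => congrArg _ ?_⟩
  have hA := concat_mem_Ico (hP.mem_Ico hδ) hX
  obtain ⟨μ, hμ⟩ := exists_floor_mul_eq hq hA
  rw [hτh _ μ hμ]
  refine hcell _ (hgrid_cube μ) _ (fun i j => Set.Ico_subset_Icc_self (hA i j)) fun i j => ?_
  simp [grid, hμ, div_inv_eq_mul, inv_mul_cancel_right₀ hqR.ne']

/-- for every function `h : [0,1]^{d×(L_p+L)} → G_{δ,(L_p+L)}` that is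
constant on quantization cells, there exists a transformer `τ ∈ 𝒯_A^{1,1,4}` with
`τ([P, X])_{:,L_p:} = h([P, X])_{:,L_p:}` for every grid prompt `P ∈ G_{δ,L_p}` and every
`X ∈ [0,1)^{d×L}`. -/
theorem transformer_realizes_quantized_map (d L Lp : ℕ) (hd : 1 ≤ d) (hL : 1 ≤ L)
    (hLp : 1 ≤ Lp) (δ : ℝ) (hδ0 : 0 < δ) (hδ1 : δ < 1)
    (hδint : ∃ q : ℕ, (q : ℝ) * δ = 1)
    (h : (Fin d → Fin (Lp + L) → ℝ) → Fin d → Fin (Lp + L) → ℝ)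
    (hgrid : ∀ X ∈ cube d (Lp + L), inGrid δ (h X))
    (hcell : ∀ X ∈ cube d (Lp + L), ∀ Y ∈ cube d (Lp + L),
      (∀ i j, ⌊X i j / δ⌋ = ⌊Y i j / δ⌋) → h X = h Y) :
    ∃ τ : (Fin d → Fin (Lp + L) → ℝ) → Fin d → Fin (Lp + L) → ℝ,
      InTA τ ∧
      ∀ (P : Fin d → Fin Lp → ℝ) (X : Fin d → Fin L → ℝ),
        inGrid δ P → (∀ i j, X i j ∈ Set.Ico (0 : ℝ) 1) →
        lastCols Lp L (τ (concat P X)) = lastCols Lp L (h (concat P X)) :=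
  transformer_realizes_quantized_map_general d L Lp δ hδint h hgrid hcell
end

section
/- Let 1 ≤ α < ∞, ε > 0, C > 0 and integers d, L ≥ 1. For every C-Lipschitz function f: [0,1]^{d×L} → [0,1]^{d×L} there exists a transformer τ ∈ 𝒯_A^{1,1,4} on sequences of length L (a composition of finitely many width-4 feed-forward layers, one single-head hidden-size-1 self-attention layer with residual connection whose weight matrices may have any rank, and finitely many width-4 feed-forward layers, applied after adding the positional encoding E with E_{i,j} = j−1) such that d_α(τ, f) ≤ ε, where d_α(τ, f) = (∫_{[0,1]^{d×L}} ‖τ(X) − f(X)‖_α^α dX)^{1/α}. -/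
open MeasureTheory

/-- The entrywise `ℓ_α` norm of a `d × m` array: `(∑_{i,j} |M_{ij}|^α)^{1/α}`. -/
noncomputable def anorm {d m : ℕ} (α : ℝ) (M : Fin d → Fin m → ℝ) : ℝ :=
  (∑ i, ∑ j, |M i j| ^ α) ^ (1 / α)

namespace TransformerUniversality

open Finset Function

noncomputable def ramp (x : ℝ) : ℝ := min (max x 0) 1

lemma ramp_of_nonpos {x : ℝ} (h : x ≤ 0) : ramp x = 0 := by
  simp [ramp, max_eq_right h]

lemma ramp_of_mem_Icc {x : ℝ} (h : x ∈ Set.Icc 0 1) : ramp x = x := by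
  simp [ramp, max_eq_left h.1, min_eq_left h.2]

lemma ramp_of_one_le {x : ℝ} (h : 1 ≤ x) : ramp x = 1 := by
  simp [ramp, max_eq_left (zero_le_one.trans h), min_eq_right h]

lemma ramp_mem_Icc (x : ℝ) : ramp x ∈ Set.Icc 0 1 :=
  ⟨le_min (le_max_right x 0) zero_le_one, min_le_right _ _⟩

lemma pl3_ramp : PL3 ramp := by
  refine ⟨0, 1, 0, 0, 1, 0, 0, 1, zero_le_one, Or.inl rfl, fun x hx => ?_,
    fun x h0 h1 => ?_, fun x hx => ?_⟩
  · rw [ramp_of_nonpos hx.le]; ring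
  · rw [ramp_of_mem_Icc ⟨h0, h1.le⟩]; ring
  · rw [ramp_of_one_le hx]; ring

/-- In a residual layer this activation turns `x` into `ramp x`. -/
lemma pl3_ramp_sub_self : PL3 (fun x => ramp x - x) := by
  refine ⟨0, 1, -1, 0, 0, 0, -1, 1, zero_le_one, Or.inr (Or.inl rfl), fun x hx => ?_,
    fun x h0 h1 => ?_, fun x hx => ?_⟩ <;> dsimp only
  · rw [ramp_of_nonpos hx.le]; ring
  · rw [ramp_of_mem_Icc ⟨h0, h1.le⟩]; ring
  · rw [ramp_of_one_le hx]; ring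

section ComposeList

variable {β ι : Type*}

lemma composeList_cons (f : β → β) (l : List (β → β)) :
    composeList (f :: l) = f ∘ composeList l := rfl

lemma composeList_append (l₁ l₂ : List (β → β)) :
    composeList (l₁ ++ l₂) = composeList l₁ ∘ composeList l₂ := by
  induction l₁ with
  | nil => rfl
  | cons f l ih => rw [List.cons_append, composeList_cons, composeList_cons, ih]; rfl

lemma composeList_flatMap (l : List ι) (F : ι → List (β → β)) :
    composeList (l.flatMap F) = composeList (l.map fun i => composeList (F i)) := by
  induction l with
  | nil => rfl
  | cons i l ih => rw [List.flatMap_cons, composeList_append, ih]; rfl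

lemma composeList_map_eq_self (F : ι → β → β) {l : List ι} {v : β}
    (h : ∀ i ∈ l, F i v = v) : composeList (l.map F) v = v := by
  induction l with
  | nil => rfl
  | cons i l ih =>
    rw [List.map_cons, composeList_cons, comp_apply,
      ih fun j hj => h j (List.mem_cons_of_mem i hj), h i List.mem_cons_self]

lemma composeList_map_eq_of_unique [DecidableEq ι] (F : ι → β → β) {l : List ι} (hl : l.Nodup)
    {i₀ : ι} (hi₀ : i₀ ∈ l) {v w : β} (hfire : F i₀ v = w)
    (hv : ∀ i ∈ l, i ≠ i₀ → F i v = v) (hw : ∀ i ∈ l, i ≠ i₀ → F i w = w) :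
    composeList (l.map F) v = w := by
  induction l with
  | nil => simp at hi₀
  | cons i l ih =>
    obtain ⟨hil, hl⟩ := List.nodup_cons.mp hl
    rw [List.map_cons, composeList_cons, comp_apply]
    by_cases hii₀ : i = i₀
    · subst hii₀
      rw [composeList_map_eq_self F fun j hj => hv j (List.mem_cons_of_mem i hj)
        (ne_of_mem_of_not_mem hj hil), hfire]
    · rw [ih hl ((List.mem_cons.mp hi₀).resolve_left (Ne.symm hii₀))
          (fun j hj => hv j (List.mem_cons_of_mem i hj))
          (fun j hj => hw j (List.mem_cons_of_mem i hj)),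
        hw i List.mem_cons_self hii₀]

lemma composeList_map_update [DecidableEq ι] {V : Type*} (G : ι → (ι → V) → ι → V)
    {l : List ι} (hl : l.Nodup) (v u : ι → V)
    (hG : ∀ i ∈ l, ∀ w : ι → V, w i = v i → (∀ j ∉ l, w j = v j) → G i w = update w i (u i)) :
    composeList (l.map G) v = fun j => if j ∈ l then u j else v j := by
  induction l with
  | nil => funext j; simp [composeList]
  | cons i l ih =>
    obtain ⟨hil, hl⟩ := List.nodup_cons.mp hl
    rw [List.map_cons, composeList_cons, comp_apply,
      ih hl fun j hj w hwj hw => hG j (List.mem_cons_of_mem i hj) w hwj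
        fun k hk => hw k fun hkl => hk (List.mem_cons_of_mem i hkl),
      hG i List.mem_cons_self _ (by simp [hil])
        fun j hj => by simp [List.not_mem_of_not_mem_cons hj]]
    funext j
    by_cases hji : j = i
    · subst hji; simp
    · simp [hji]

end ComposeList

abbrev TokenMap (d : ℕ) := (Fin d → ℝ) → Fin d → ℝ

def tokenwise {d n : ℕ} (g : TokenMap d) (Z : Fin d → Fin n → ℝ) : Fin d → Fin n → ℝ :=
  fun i k => g (column Z k) i

lemma column_tokenwise {d n : ℕ} (g : TokenMap d) (Z : Fin d → Fin n → ℝ) (k : Fin n) :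
    column (tokenwise g Z) k = g (column Z k) := rfl

lemma composeList_map_tokenwise {d n : ℕ} (gs : List (TokenMap d)) :
    composeList (gs.map (tokenwise (n := n))) = tokenwise (composeList gs) := by
  induction gs with
  | nil => rfl
  | cons g gs ih => rw [List.map_cons, composeList_cons, ih, composeList_cons]; rfl

noncomputable def coordLayer {d : ℕ} (φ : ℝ → ℝ) (i₀ : Fin d) (w : Fin d → ℝ)
    (c s b : Fin 4 → ℝ) : TokenMap d :=
  fun v => update v i₀ (v i₀ + ∑ j, c j * φ (s j * (w ⬝ᵥ v) + b j))

lemma isFF4_tokenwise_coordLayer {d n : ℕ} {φ : ℝ → ℝ} (hφ : PL3 φ) (i₀ : Fin d)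
    (w : Fin d → ℝ) (c s b : Fin 4 → ℝ) :
    IsFF4 (tokenwise (n := n) (coordLayer φ i₀ w c s b)) := by
  refine ⟨φ, fun j => s j • w, fun i j => (Pi.single i₀ (c j) : Fin d → ℝ) i, b, 0, hφ, ?_⟩
  funext Z i k
  have hW1 : ∀ j, mvec (fun j => s j • w) (column Z k) j = s j * (w ⬝ᵥ column Z k) := by
    intro j
    simp only [mvec, dotProduct, Pi.smul_apply, smul_eq_mul, Finset.mul_sum, mul_assoc]
  simp only [tokenwise, coordLayer, ffLayer, hW1, Pi.zero_apply, add_zero]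
  simp only [mvec]
  by_cases hi : i = i₀
  · subst hi; simp [column]
  · simp [hi, column]

section Layers

variable {d : ℕ}

/-- Adds `a` times the unit tent centred at `t`, evaluated at `w ⬝ᵥ v`, to coordinate `i₀`. -/
noncomputable def bumpLayer (i₀ : Fin d) (w : Fin d → ℝ) (t a : ℝ) : TokenMap d :=
  coordLayer ramp i₀ w ![a, -a, 0, 0] ![1, 1, 0, 0] ![1 - t, -t, 0, 0]

lemma bumpLayer_apply (i₀ : Fin d) (w : Fin d → ℝ) (t a : ℝ) (v : Fin d → ℝ) :
    bumpLayer i₀ w t a v =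
      update v i₀ (v i₀ + a * (ramp (w ⬝ᵥ v - t + 1) - ramp (w ⬝ᵥ v - t))) := by
  simp only [bumpLayer, coordLayer, Fin.sum_univ_four, Matrix.cons_val_zero, Matrix.cons_val_one,
    Matrix.cons_val, one_mul, neg_mul, zero_mul, add_zero]
  ring_nf

lemma bumpLayer_of_eq {i₀ : Fin d} {w : Fin d → ℝ} {t : ℝ} (a : ℝ) {v : Fin d → ℝ}
    (h : w ⬝ᵥ v = t) : bumpLayer i₀ w t a v = update v i₀ (v i₀ + a) := by
  rw [bumpLayer_apply, h, sub_self, zero_add, ramp_of_one_le le_rfl, ramp_of_nonpos le_rfl,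
    sub_zero, mul_one]

lemma bumpLayer_of_far {i₀ : Fin d} {w : Fin d → ℝ} {t : ℝ} (a : ℝ) {v : Fin d → ℝ}
    (h : w ⬝ᵥ v ≤ t - 1 ∨ t + 1 ≤ w ⬝ᵥ v) : bumpLayer i₀ w t a v = v := by
  rw [bumpLayer_apply]
  rcases h with h | h
  · rw [ramp_of_nonpos (by linarith), ramp_of_nonpos (by linarith)]
    simp
  · rw [ramp_of_one_le (by linarith), ramp_of_one_le (by linarith)]
    simp

lemma bumpLayer_of_natCast_ne {i₀ : Fin d} {w : Fin d → ℝ} {m n : ℕ} (a : ℝ) {v : Fin d → ℝ}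
    (h : w ⬝ᵥ v = m) (hmn : m ≠ n) : bumpLayer i₀ w n a v = v := by
  refine bumpLayer_of_far a ?_
  rw [h]
  rcases Nat.lt_or_gt_of_ne hmn with hlt | hlt
  · left
    have : (m : ℝ) + 1 ≤ n := by exact_mod_cast hlt
    linarith
  · right
    have : (n : ℝ) + 1 ≤ m := by exact_mod_cast hlt
    linarith

noncomputable def clipLayer (i₀ : Fin d) : TokenMap d :=
  coordLayer (fun x => ramp x - x) i₀ (Pi.single i₀ 1) ![1, 0, 0, 0] ![1, 0, 0, 0] 0

lemma clipLayer_apply (i₀ : Fin d) (v : Fin d → ℝ) :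
    clipLayer i₀ v = update v i₀ (ramp (v i₀)) := by
  simp [clipLayer, coordLayer, Fin.sum_univ_four]

/-- The added function of `x = v i` rises by `c - a - η` on `[a, a + η]`, has slope `-1` on
`[a + η, b - η]` and returns to `0` on `[b - η, b]`. -/
noncomputable def snapLayer (i : Fin d) (a b η c : ℝ) : TokenMap d :=
  coordLayer ramp i (Pi.single i 1)
    ![c - a - η, -(b - a - 2 * η), -(c - b + η), 0]
    ![1 / η, 1 / (b - a - 2 * η), 1 / η, 0]
    ![-(a / η), -((a + η) / (b - a - 2 * η)), -((b - η) / η), 0]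

section Snap

variable {i : Fin d} {a b η : ℝ} (c : ℝ) {v : Fin d → ℝ}

lemma snapLayer_apply :
    snapLayer i a b η c v = update v i (v i
      + (c - a - η) * ramp ((v i - a) / η)
      - (b - a - 2 * η) * ramp ((v i - a - η) / (b - a - 2 * η))
      - (c - b + η) * ramp ((v i - b + η) / η)) := by
  simp only [snapLayer, coordLayer, Fin.sum_univ_four, single_one_dotProduct]
  simp only [Matrix.cons_val_zero, Matrix.cons_val_one, Matrix.cons_val_two,
    Matrix.cons_val_three, Matrix.head_cons, Matrix.tail_cons, zero_mul, add_zero]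
  have h₁ : 1 / η * v i + -(a / η) = (v i - a) / η := by ring
  have h₂ : 1 / (b - a - 2 * η) * v i + -((a + η) / (b - a - 2 * η))
      = (v i - a - η) / (b - a - 2 * η) := by ring
  have h₃ : 1 / η * v i + -((b - η) / η) = (v i - b + η) / η := by ring
  rw [h₁, h₂, h₃]
  ring_nf

lemma snapLayer_of_mem (hη : 0 < η) (hab : 2 * η < b - a)
    (h : v i ∈ Set.Icc (a + η) (b - η)) : snapLayer i a b η c v = update v i c := by
  have hw : 0 < b - a - 2 * η := by linarith
  rw [snapLayer_apply c,
    ramp_of_one_le ((one_le_div hη).mpr (by linarith [h.1])),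
    ramp_of_mem_Icc ⟨div_nonneg (by linarith [h.1]) hw.le,
      (div_le_one hw).mpr (by linarith [h.2])⟩,
    ramp_of_nonpos (div_nonpos_of_nonpos_of_nonneg (by linarith [h.2]) hη.le),
    mul_div_cancel₀ _ hw.ne']
  congr 1
  ring

lemma snapLayer_of_not_mem (hη : 0 < η) (hab : 2 * η < b - a) (h : v i ≤ a ∨ b ≤ v i) :
    snapLayer i a b η c v = v := by
  have hw : 0 < b - a - 2 * η := by linarith
  rw [snapLayer_apply c]
  rcases h with h | h
  · rw [ramp_of_nonpos (div_nonpos_of_nonpos_of_nonneg (by linarith) hη.le),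
      ramp_of_nonpos (div_nonpos_of_nonpos_of_nonneg (by linarith) hw.le),
      ramp_of_nonpos (div_nonpos_of_nonpos_of_nonneg (by linarith) hη.le)]
    simp
  · rw [ramp_of_one_le ((one_le_div hη).mpr (by linarith)),
      ramp_of_one_le ((one_le_div hw).mpr (by linarith)),
      ramp_of_one_le ((one_le_div hη).mpr (by linarith))]
    convert update_eq_self i v using 2
    ring

end Snap

end Layers

section Codes

lemma sum_mul_pow_lt {n B : ℕ} {a : Fin n → ℕ} (ha : ∀ i, a i < B) :
    ∑ i, a i * B ^ (i : ℕ) < B ^ n :=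
  (finFunctionFinEquiv fun i => (⟨a i, ha i⟩ : Fin B)).isLt

lemma sum_mul_pow_injective {n B : ℕ} {a b : Fin n → ℕ} (ha : ∀ i, a i < B)
    (hb : ∀ i, b i < B) (h : ∑ i, a i * B ^ (i : ℕ) = ∑ i, b i * B ^ (i : ℕ)) : a = b := by
  have hab := finFunctionFinEquiv.injective
    (Fin.ext h : finFunctionFinEquiv (fun i => (⟨a i, ha i⟩ : Fin B)) =
      finFunctionFinEquiv fun i => ⟨b i, hb i⟩)
  funext i
  exact congrArg Fin.val (congrFun hab i)

/-- `Q k i` is the cell of `[0, 1]` containing entry `(i, k)` of a `(d + 1) × (L + 1)` input. -/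
abbrev CellMatrix (d L N : ℕ) := Fin (L + 1) → Fin (d + 1) → Fin N

variable {d L N : ℕ}

/-- `finProdFinEquiv (k, q) = q + N k` indexes the cell `[k + q / N, k + (q + 1) / N]` of
`[0, L + 1]`; the offset `L + 2` puts labels beyond every cell, so that snapped values are not
snapped again. -/
def cellLabel (k : Fin (L + 1)) (q : Fin N) : ℕ := L + 2 + finProdFinEquiv (k, q)

variable (L N) in
def labelBound : ℕ := L + 2 + (L + 1) * N

lemma cellLabel_lt (k : Fin (L + 1)) (q : Fin N) : cellLabel k q < labelBound L N :=
  Nat.add_lt_add_left (finProdFinEquiv (k, q)).isLt _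

lemma cellLabel_injective {k k' : Fin (L + 1)} {q q' : Fin N}
    (h : cellLabel k q = cellLabel k' q') : k = k' ∧ q = q' :=
  Prod.ext_iff.mp (finProdFinEquiv.injective (Fin.ext (Nat.add_left_cancel h)))

def tokenKey (k : Fin (L + 1)) (q : Fin (d + 1) → Fin N) : ℕ :=
  ∑ i, cellLabel k (q i) * labelBound L N ^ (i : ℕ)

variable (d L N) in
def keyBound : ℕ := labelBound L N ^ (d + 1)

lemma tokenKey_lt (k : Fin (L + 1)) (q : Fin (d + 1) → Fin N) : tokenKey k q < keyBound d L N :=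
  sum_mul_pow_lt fun i => cellLabel_lt k (q i)

lemma tokenKey_injective {k k' : Fin (L + 1)} {q q' : Fin (d + 1) → Fin N}
    (h : tokenKey k q = tokenKey k' q') : k = k' ∧ q = q' := by
  have hlabel := congrFun (sum_mul_pow_injective (fun i => cellLabel_lt k (q i))
    (fun i => cellLabel_lt k' (q' i)) h)
  exact ⟨(cellLabel_injective (hlabel 0)).1, funext fun i => (cellLabel_injective (hlabel i)).2⟩

def tokenValue (k : Fin (L + 1)) (q : Fin (d + 1) → Fin N) : ℕ :=
  keyBound d L N + (finFunctionFinEquiv q + N ^ (d + 1)) * (4 * N ^ (d + 1)) ^ (k : ℕ)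

/-- Coordinate `0` of token `k` after attention has added up all token values. -/
def seqKey (k : Fin (L + 1)) (Q : CellMatrix d L N) : ℕ :=
  tokenValue k (Q k) + ∑ l, tokenValue l (Q l)

lemma keyBound_le_tokenValue (k : Fin (L + 1)) (q : Fin (d + 1) → Fin N) :
    keyBound d L N ≤ tokenValue k q :=
  Nat.le_add_right _ _

lemma two_le_seqKey (k : Fin (L + 1)) (Q : CellMatrix d L N) : 2 ≤ seqKey k Q := by
  have h2 : 2 ≤ keyBound d L N :=
    (by unfold labelBound; omega : 2 ≤ labelBound L N).trans
      (Nat.le_self_pow (Nat.succ_ne_zero d) _)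
  exact h2.trans ((keyBound_le_tokenValue k (Q k)).trans (Nat.le_add_right _ _))

/-- With `M = N^(d+1)`, the base-`4M` digits of `seqKey k Q` are `code (Q l) + M`, doubled at
`l = k`; doubled and single digits lie in the disjoint ranges `[2M, 4M)` and `[M, 2M)`. -/
lemma seqKey_eq (k : Fin (L + 1)) (Q : CellMatrix d L N) :
    seqKey k Q = (L + 2) * keyBound d L N + ∑ l, (if l = k then 2 else 1) *
      (finFunctionFinEquiv (Q l) + N ^ (d + 1)) * (4 * N ^ (d + 1)) ^ (l : ℕ) := by
  have hsum : ∀ l, (if l = k then 2 else 1) * (finFunctionFinEquiv (Q l) + N ^ (d + 1)) *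
      (4 * N ^ (d + 1)) ^ (l : ℕ) =
      (finFunctionFinEquiv (Q l) + N ^ (d + 1)) * (4 * N ^ (d + 1)) ^ (l : ℕ) +
        if l = k then (finFunctionFinEquiv (Q k) + N ^ (d + 1)) * (4 * N ^ (d + 1)) ^ (k : ℕ)
        else 0 := by
    intro l
    split_ifs with hl
    · subst hl; ring
    · ring
  simp only [hsum, sum_add_distrib, sum_ite_eq', mem_univ, if_true, seqKey, tokenValue,
    sum_const, card_univ, Fintype.card_fin, smul_eq_mul]
  ring

lemma seqKey_injective {k k' : Fin (L + 1)} {Q Q' : CellMatrix d L N}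
    (h : seqKey k Q = seqKey k' Q') : k = k' ∧ Q = Q' := by
  have hcode : ∀ q : Fin (d + 1) → Fin N, (finFunctionFinEquiv q : ℕ) < N ^ (d + 1) :=
    fun q => (finFunctionFinEquiv q).isLt
  have hdigit_lt : ∀ (k : Fin (L + 1)) (Q : CellMatrix d L N) l,
      (if l = k then 2 else 1) * (finFunctionFinEquiv (Q l) + N ^ (d + 1)) <
        4 * N ^ (d + 1) := by
    intro k Q l
    have := hcode (Q l)
    split_ifs <;> omega
  rw [seqKey_eq, seqKey_eq] at h
  have hdigits := congrFun (sum_mul_pow_injective (hdigit_lt k Q) (hdigit_lt k' Q')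
    (Nat.add_left_cancel h))
  have hkk' : k = k' := by
    by_contra hne
    have := hdigits k
    rw [if_pos rfl, if_neg hne] at this
    have := hcode (Q k)
    have := hcode (Q' k)
    omega
  subst hkk'
  refine ⟨rfl, funext fun l => finFunctionFinEquiv.injective (Fin.ext ?_)⟩
  have := hdigits l
  split_ifs at this <;> omega

end Codes

section Stages

variable {d L N : ℕ} {η : ℝ}

lemma natCast_pos_of_two_mul_lt_inv (hη : 0 < η) (hηN : 2 * η < (N : ℝ)⁻¹) : (0 : ℝ) < N :=
  inv_pos.mp (by linarith)

def cellCore (N : ℕ) (η : ℝ) (q : ℕ) : Set ℝ :=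
  Set.Icc ((q : ℝ) / N + η) (((q : ℝ) + 1) / N - η)

noncomputable def labelCol (k : Fin (L + 1)) (q : Fin (d + 1) → Fin N) : Fin (d + 1) → ℝ :=
  fun i => cellLabel k (q i)

variable (L N) in
noncomputable def snapBlock (η : ℝ) (i : Fin (d + 1)) : List (TokenMap (d + 1)) :=
  (univ.toList : List (Fin ((L + 1) * N))).map fun m : Fin ((L + 1) * N) =>
    snapLayer i ((m : ℕ) / N) (((m : ℕ) + 1) / N) η (L + 2 + (m : ℕ))

variable (d L N) in
noncomputable def quantStage (η : ℝ) : List (TokenMap (d + 1)) :=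
  (univ.toList : List (Fin (d + 1))).flatMap (snapBlock L N η)

lemma composeList_snapBlock (hη : 0 < η) (hηN : 2 * η < (N : ℝ)⁻¹) (i : Fin (d + 1))
    {m₀ : Fin ((L + 1) * N)} {v : Fin (d + 1) → ℝ} (hv : v i ∈ cellCore N η m₀) :
    composeList (snapBlock L N η i) v = update v i (L + 2 + (m₀ : ℕ)) := by
  have hN := natCast_pos_of_two_mul_lt_inv hη hηN
  have hwidth : ∀ m : ℕ, 2 * η < ((m : ℝ) + 1) / N - m / N := fun m => by
    rwa [← sub_div, add_sub_cancel_left, one_div]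
  have hcell_le : ∀ m m' : ℕ, m < m' → ((m : ℝ) + 1) / N ≤ m' / N := fun m m' h =>
    div_le_div_of_nonneg_right (by exact_mod_cast h) hN.le
  refine composeList_map_eq_of_unique _ (nodup_toList _) (mem_toList.mpr (mem_univ m₀))
    (snapLayer_of_mem _ hη (hwidth m₀) hv)
    (fun m _ hm => snapLayer_of_not_mem _ hη (hwidth m) ?_)
    (fun m _ _ => snapLayer_of_not_mem _ hη (hwidth m) (Or.inr ?_))
  · rcases lt_or_gt_of_ne (Fin.val_ne_of_ne hm) with h | h
    · exact Or.inr (by linarith [hcell_le _ _ h, hv.1])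
    · exact Or.inl (by linarith [hcell_le _ _ h, hv.2])
  · have hm : ((m : ℕ) + 1 : ℝ) ≤ (L + 1) * N := by exact_mod_cast m.isLt
    rw [update_self, div_le_iff₀ hN]
    nlinarith [(Nat.cast_nonneg (m₀ : ℕ) : (0 : ℝ) ≤ _)]

lemma composeList_quantStage (hη : 0 < η) (hηN : 2 * η < (N : ℝ)⁻¹)
    {k : Fin (L + 1)} {q : Fin (d + 1) → Fin N} {v : Fin (d + 1) → ℝ}
    (hv : ∀ i, v i - k ∈ cellCore N η (q i)) :
    composeList (quantStage d L N η) v = labelCol k q := by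
  have hN := natCast_pos_of_two_mul_lt_inv hη hηN
  have hcell : ∀ i (c : ℝ), (((finProdFinEquiv (k, q i) : ℕ) : ℝ) + c) / N =
      k + (((q i : ℕ) : ℝ) + c) / N := by
    intro i c
    simp only [finProdFinEquiv_apply_val, Nat.cast_add, Nat.cast_mul]
    field_simp
    ring
  rw [quantStage, composeList_flatMap,
    composeList_map_update _ (nodup_toList _) v fun i => (cellLabel k (q i) : ℝ)]
  · funext i
    simp [labelCol]
  · intro i _ w hwi _
    rw [composeList_snapBlock hη hηN i (m₀ := finProdFinEquiv (k, q i)), cellLabel]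
    · push_cast; rfl
    · have hc₀ := hcell i 0
      simp only [add_zero] at hc₀
      rw [hwi, cellCore, Set.mem_Icc, hcell i 1, hc₀]
      have := hv i
      constructor <;> linarith [this.1, this.2]

noncomputable def keyWeights (d L N : ℕ) : Fin (d + 1) → ℝ :=
  fun i => (labelBound L N : ℝ) ^ (i : ℕ)

variable (d L N) in
noncomputable def lookupStage : List (TokenMap (d + 1)) :=
  (univ.toList : List (Fin (L + 1) × (Fin (d + 1) → Fin N))).map fun s =>
    bumpLayer 0 (keyWeights d L N) (tokenKey s.1 s.2)
      (tokenValue s.1 s.2 - cellLabel s.1 (s.2 0))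

lemma keyWeights_dotProduct_labelCol (k : Fin (L + 1)) (q : Fin (d + 1) → Fin N) :
    keyWeights d L N ⬝ᵥ labelCol k q = tokenKey k q := by
  simp only [dotProduct, keyWeights, labelCol, tokenKey]
  push_cast
  exact sum_congr rfl fun i _ => mul_comm _ _

lemma composeList_lookupStage (k : Fin (L + 1)) (q : Fin (d + 1) → Fin N) :
    composeList (lookupStage d L N) (labelCol k q) =
      update (labelCol k q) 0 (tokenValue k q) := by
  have hkey := keyWeights_dotProduct_labelCol k q
  refine composeList_map_eq_of_unique _ (nodup_toList _) (mem_toList.mpr (mem_univ (k, q)))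
    ?_ (fun s _ hs => bumpLayer_of_natCast_ne _ hkey fun h => hs ?_)
    (fun s _ _ => bumpLayer_of_far _ (Or.inr ?_))
  · rw [bumpLayer_of_eq _ hkey]
    congr 1
    simp [labelCol]
  · obtain ⟨h₁, h₂⟩ := tokenKey_injective h.symm
    exact Prod.ext h₁ h₂
  · -- after the lookup, the key is at least the stored value, which exceeds every token key
    have hterm : ∀ i ∈ univ,
        0 ≤ keyWeights d L N i * update (labelCol k q) 0 (tokenValue k q) i := fun i _ =>
      mul_nonneg (by unfold keyWeights; positivity) (by
        by_cases hi : i = 0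
        · subst hi; simp
        · simp [hi, labelCol])
    have hvalue := single_le_sum hterm (mem_univ 0)
    simp only [keyWeights, Fin.val_zero, pow_zero, one_mul, update_self] at hvalue
    have hlt : tokenKey s.1 s.2 + 1 ≤ tokenValue k q :=
      (tokenKey_lt s.1 s.2).trans_le (keyBound_le_tokenValue k q)
    have : (tokenKey s.1 s.2 : ℝ) + 1 ≤ tokenValue k q := by exact_mod_cast hlt
    exact this.trans hvalue

end Stages

section Readout

variable {d L N : ℕ}

/-- With zero query and key weights attention is uniform, so this layer adds the sum over all
tokens of coordinate `0` to coordinate `0` of every token. -/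
noncomputable def sumLayer (d L : ℕ) :
    (Fin (d + 1) → Fin (L + 1) → ℝ) → Fin (d + 1) → Fin (L + 1) → ℝ :=
  saLayer (s := 1) (fun i _ => (Pi.single 0 ((L : ℝ) + 1) : Fin (d + 1) → ℝ) i)
    (fun _ => Pi.single 0 1) 0 0

lemma column_sumLayer (Z : Fin (d + 1) → Fin (L + 1) → ℝ) (k : Fin (L + 1)) :
    column (sumLayer d L Z) k = update (column Z k) 0 (Z 0 k + ∑ l, Z 0 l) := by
  have hsmax : ∀ a : Fin (L + 1) → ℝ, (∀ l, a l = 0) → ∀ l, smax a l = 1 / ((L : ℝ) + 1) := by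
    intro a ha l
    simp [smax, ha]
  funext i
  simp only [column, sumLayer, saLayer, mvec, Pi.zero_apply, zero_mul, sum_const_zero,
    hsmax _ (fun _ => rfl), Fin.sum_univ_one]
  by_cases hi : i = 0
  · subst hi
    simp only [Pi.single_eq_same, update_self, one_div, ← sum_mul]
    field_simp
    simp [Pi.single_apply]
  · simp [hi, column]

noncomputable def keyedCol (k : Fin (L + 1)) (Q : CellMatrix d L N) : Fin (d + 1) → ℝ :=
  update (labelCol k (Q k)) 0 (seqKey k Q)

variable (d L N) in
noncomputable def writeBlock (y : Fin (L + 1) × CellMatrix d L N → Fin (d + 1) → ℝ)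
    (i : Fin (d + 1)) : List (TokenMap (d + 1)) :=
  (univ.toList : List (Fin (L + 1) × CellMatrix d L N)).map fun s =>
    bumpLayer i (Pi.single 0 1) (seqKey s.1 s.2) (y s i - keyedCol s.1 s.2 i)

/-- Coordinate `0` holds the key, so it is overwritten last. -/
noncomputable def writeStage (y : Fin (L + 1) × CellMatrix d L N → Fin (d + 1) → ℝ) :
    List (TokenMap (d + 1)) :=
  writeBlock d L N y 0 ++
    ((univ.toList : List (Fin (d + 1))).filter (· ≠ 0)).flatMap (writeBlock d L N y)

lemma composeList_writeBlock {y : Fin (L + 1) × CellMatrix d L N → Fin (d + 1) → ℝ}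
    {s : Fin (L + 1) × CellMatrix d L N} (hy : y s 0 ∈ Set.Icc 0 1)
    (i : Fin (d + 1)) {v : Fin (d + 1) → ℝ} (hv₀ : v 0 = seqKey s.1 s.2)
    (hvi : v i = keyedCol s.1 s.2 i) :
    composeList (writeBlock d L N y i) v = update v i (y s i) := by
  have hkey : ∀ {w : Fin (d + 1) → ℝ}, w 0 = seqKey s.1 s.2 → ∀ s' ≠ s,
      bumpLayer i (Pi.single 0 1) (seqKey s'.1 s'.2) (y s' i - keyedCol s'.1 s'.2 i) w = w := by
    intro w hw s' hs'
    refine bumpLayer_of_natCast_ne _ (by rw [single_one_dotProduct, hw]) fun h => hs' ?_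
    obtain ⟨h₁, h₂⟩ := seqKey_injective h
    exact Prod.ext h₁.symm h₂.symm
  refine composeList_map_eq_of_unique _ (nodup_toList _) (mem_toList.mpr (mem_univ s))
    ?_ (fun s' _ hs' => hkey hv₀ s' hs') (fun s' _ hs' => ?_)
  · rw [bumpLayer_of_eq _ (by rw [single_one_dotProduct, hv₀]), hvi, add_sub_cancel]
  · by_cases hi : i = 0
    · subst hi
      refine bumpLayer_of_far _ (Or.inl ?_)
      have : (2 : ℝ) ≤ seqKey s'.1 s'.2 := by exact_mod_cast two_le_seqKey s'.1 s'.2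
      rw [single_one_dotProduct, update_self]
      linarith [hy.2]
    · exact hkey (by rw [update_of_ne (Ne.symm hi), hv₀]) s' hs'

lemma composeList_writeStage {y : Fin (L + 1) × CellMatrix d L N → Fin (d + 1) → ℝ}
    {s : Fin (L + 1) × CellMatrix d L N} (hy : y s 0 ∈ Set.Icc 0 1) :
    composeList (writeStage y) (keyedCol s.1 s.2) = y s := by
  have h₀ : (0 : Fin (d + 1)) ∉ (univ.toList : List (Fin (d + 1))).filter (· ≠ 0) := by simp
  rw [writeStage, composeList_append, comp_apply, composeList_flatMap,
    composeList_map_update _ ((nodup_toList _).filter _) _ (y s)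
      fun i _ w hwi hw => composeList_writeBlock hy i
        (by rw [hw 0 h₀, keyedCol, update_self]) hwi,
    composeList_writeBlock hy 0 (by simp [keyedCol]) (by simp)]
  funext i
  by_cases hi : i = 0
  · subst hi; simp
  · simp [hi]

variable (d) in
noncomputable def clipStage : List (TokenMap (d + 1)) :=
  (univ.toList : List (Fin (d + 1))).map clipLayer

lemma composeList_clipStage (v : Fin (d + 1) → ℝ) :
    composeList (clipStage d) v = fun i => ramp (v i) := by
  rw [clipStage, composeList_map_update _ (nodup_toList _) v fun i => ramp (v i)]
  · funext i
    simp
  · intro i _ w hwi _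
    rw [clipLayer_apply, hwi]

end Readout

section Approximant

variable {d L N : ℕ}

variable (d L N) in
noncomputable def approximant (η : ℝ) (y : Fin (L + 1) × CellMatrix d L N → Fin (d + 1) → ℝ) :
    (Fin (d + 1) → Fin (L + 1) → ℝ) → Fin (d + 1) → Fin (L + 1) → ℝ :=
  fun Z => composeList ((clipStage d ++ writeStage y).map tokenwise)
    (sumLayer d L (composeList ((lookupStage d L N ++ quantStage d L N η).map tokenwise)
      (addPE Z)))

lemma forall_isFF4_map_tokenwise {n : ℕ} {l : List (TokenMap d)}
    (hl : ∀ g ∈ l, ∃ φ, PL3 φ ∧ ∃ i w c s b, g = coordLayer φ i w c s b) :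
    ∀ f ∈ l.map (tokenwise (n := n)), IsFF4 f := by
  simp only [List.mem_map]
  rintro _ ⟨g, hg, rfl⟩
  obtain ⟨φ, hφ, i, w, c, s, b, rfl⟩ := hl g hg
  exact isFF4_tokenwise_coordLayer hφ i w c s b

lemma inTA_approximant (η : ℝ) (y : Fin (L + 1) × CellMatrix d L N → Fin (d + 1) → ℝ) :
    InTA (approximant d L N η y) := by
  refine ⟨_, _, _, forall_isFF4_map_tokenwise ?_, forall_isFF4_map_tokenwise ?_,
    ⟨_, _, _, _, rfl⟩, rfl⟩
  · simp only [List.mem_append, clipStage, writeStage, writeBlock, List.mem_map,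
      List.mem_flatMap]
    rintro g (⟨i, -, rfl⟩ | ⟨s, -, rfl⟩ | ⟨i, -, s, -, rfl⟩)
    exacts [⟨_, pl3_ramp_sub_self, _, _, _, _, _, rfl⟩, ⟨_, pl3_ramp, _, _, _, _, _, rfl⟩,
      ⟨_, pl3_ramp, _, _, _, _, _, rfl⟩]
  · simp only [List.mem_append, lookupStage, quantStage, snapBlock, List.mem_map,
      List.mem_flatMap]
    rintro g (⟨s, -, rfl⟩ | ⟨i, -, m, -, rfl⟩)
    exacts [⟨_, pl3_ramp, _, _, _, _, _, rfl⟩, ⟨_, pl3_ramp, _, _, _, _, _, rfl⟩]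

lemma column_approximant (η : ℝ) (y : Fin (L + 1) × CellMatrix d L N → Fin (d + 1) → ℝ)
    (Z : Fin (d + 1) → Fin (L + 1) → ℝ) (k : Fin (L + 1)) :
    column (approximant d L N η y Z) k = fun i => ramp (composeList (writeStage y)
      (column (sumLayer d L (tokenwise (composeList (lookupStage d L N ++ quantStage d L N η))
        (addPE Z))) k) i) := by
  rw [approximant, composeList_map_tokenwise, composeList_map_tokenwise, column_tokenwise,
    composeList_append, comp_apply, composeList_clipStage]

lemma approximant_mem_Icc (η : ℝ) (y : Fin (L + 1) × CellMatrix d L N → Fin (d + 1) → ℝ)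
    (Z : Fin (d + 1) → Fin (L + 1) → ℝ) (i : Fin (d + 1)) (k : Fin (L + 1)) :
    approximant d L N η y Z i k ∈ Set.Icc 0 1 := by
  change column (approximant d L N η y Z) k i ∈ _
  rw [column_approximant]
  exact ramp_mem_Icc _

lemma approximant_eq_of_mem_cellCore {η : ℝ} (hη : 0 < η) (hηN : 2 * η < (N : ℝ)⁻¹)
    {y : Fin (L + 1) × CellMatrix d L N → Fin (d + 1) → ℝ} (hy : ∀ s i, y s i ∈ Set.Icc 0 1)
    {X : Fin (d + 1) → Fin (L + 1) → ℝ} {Q : CellMatrix d L N}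
    (hX : ∀ i k, X i k ∈ cellCore N η (Q k i)) :
    approximant d L N η y X = fun i k => y (k, Q) i := by
  set P := tokenwise (composeList (lookupStage d L N ++ quantStage d L N η)) (addPE X)
  have hP : ∀ k, column P k = update (labelCol k (Q k)) 0 (tokenValue k (Q k)) := by
    intro k
    rw [column_tokenwise, composeList_append, comp_apply,
      composeList_quantStage (k := k) (q := Q k) hη hηN fun i => by
        simpa [column, addPE] using hX i k,
      composeList_lookupStage]
  have hsum : ∀ k, column (sumLayer d L P) k = keyedCol k Q := by
    intro k
    have hP0 : ∀ l, P 0 l = tokenValue l (Q l) := fun l => by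
      simpa [column] using congrFun (hP l) 0
    rw [column_sumLayer, hP, hP0, sum_congr rfl fun l _ => hP0 l, update_idem, keyedCol,
      seqKey]
    push_cast
    rfl
  funext i k
  change column (approximant d L N η y X) k i = _
  rw [column_approximant, hsum, composeList_writeStage (s := (k, Q)) (hy _ 0)]
  exact ramp_of_mem_Icc (hy _ i)

end Approximant

section Measure

lemma setIntegral_le_add_mul_measureReal_sdiff {X : Type*} [MeasurableSpace X] {μ : Measure X}
    {S G : Set X} {g : X → ℝ} {a b : ℝ} (hS : MeasurableSet S) (hG : MeasurableSet G)
    (hμS : μ S ≠ ⊤) (ha : 0 ≤ a) (hb : 0 ≤ b) (hgood : ∀ x ∈ S ∩ G, g x ≤ a)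
    (hbad : ∀ x ∈ S, g x ≤ a + b) :
    ∫ x in S, g x ∂μ ≤ a * μ.real S + b * μ.real (S \ G) := by
  by_cases hg : IntegrableOn g S μ
  · have hconst : IntegrableOn (fun _ => a) S μ := integrableOn_const hμS
    have hind : IntegrableOn (Gᶜ.indicator fun _ => b) S μ :=
      (integrableOn_const hμS).indicator hG.compl
    calc ∫ x in S, g x ∂μ ≤ ∫ x in S, (a + Gᶜ.indicator (fun _ => b) x) ∂μ := by
          refine setIntegral_mono_on hg (hconst.add hind) hS fun x hx => ?_
          by_cases hx' : x ∈ G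
          · simpa [hx'] using hgood x ⟨hx, hx'⟩
          · simpa [hx'] using hbad x hx
      _ = a * μ.real S + b * μ.real (S \ G) := by
          rw [integral_add hconst hind, setIntegral_const, setIntegral_indicator hG.compl,
            setIntegral_const, ← Set.sdiff_eq, smul_eq_mul, smul_eq_mul, mul_comm, mul_comm b]
  · rw [integral_undef hg]
    positivity

lemma cube_eq_pi (d m : ℕ) :
    cube d m = Set.univ.pi fun _ : Fin d => Set.univ.pi fun _ : Fin m => Set.Icc (0 : ℝ) 1 := by
  ext X
  simp only [cube, Set.mem_ofPred_eq, Set.mem_pi, Set.mem_univ, forall_const]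

lemma measurableSet_pi_pi {d m : ℕ} {A : Set ℝ} (hA : MeasurableSet A) :
    MeasurableSet (Set.univ.pi fun _ : Fin d => Set.univ.pi fun _ : Fin m => A) :=
  MeasurableSet.univ_pi fun _ => MeasurableSet.univ_pi fun _ => hA

lemma measurableSet_cube {d m : ℕ} : MeasurableSet (cube d m) := by
  rw [cube_eq_pi]
  exact measurableSet_pi_pi measurableSet_Icc

lemma volume_real_pi_pi (d m : ℕ) (A : Set ℝ) :
    volume.real (Set.univ.pi fun _ : Fin d => Set.univ.pi fun _ : Fin m => A) =
      volume.real A ^ (d * m) := by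
  simp only [measureReal_def, volume_pi_pi, prod_const, card_univ, Fintype.card_fin,
    ENNReal.toReal_pow, pow_mul']

lemma volume_cube (d m : ℕ) : volume (cube d m) = 1 := by
  simp only [cube_eq_pi, volume_pi_pi, Real.volume_Icc, sub_zero, ENNReal.ofReal_one,
    prod_const_one]

lemma volume_real_cube (d m : ℕ) : volume.real (cube d m) = 1 := by
  simp [measureReal_def, volume_cube]

lemma volume_real_cube_sdiff_pi_le {d m : ℕ} {A : Set ℝ} (hA : MeasurableSet A)
    (hAI : A ⊆ Set.Icc 0 1) :
    volume.real (cube d m \ Set.univ.pi fun _ : Fin d => Set.univ.pi fun _ : Fin m => A) ≤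
      d * m * (1 - volume.real A) := by
  have hsub : (Set.univ.pi fun _ : Fin d => Set.univ.pi fun _ : Fin m => A) ⊆ cube d m := by
    rw [cube_eq_pi]
    exact Set.pi_mono fun _ _ => Set.pi_mono fun _ _ => hAI
  rw [measureReal_sdiff hsub (measurableSet_pi_pi hA) (by simp [volume_cube]),
    volume_real_cube, volume_real_pi_pi]
  have hbernoulli := one_add_mul_le_pow (a := volume.real A - 1)
    (by linarith [measureReal_nonneg (μ := volume) (s := A)]) (d * m)
  rw [add_sub_cancel] at hbernoulli
  push_cast at hbernoulli
  linarith

variable {N : ℕ} {η : ℝ}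

def cellCores (N : ℕ) (η : ℝ) : Set ℝ := ⋃ q : Fin N, cellCore N η q

lemma cellCores_subset_Icc (hη : 0 < η) : cellCores N η ⊆ Set.Icc 0 1 := by
  rintro x ⟨_, ⟨q, rfl⟩, hx⟩
  have hN : (0 : ℝ) < N := by exact_mod_cast q.pos
  have hq : (q : ℝ) + 1 ≤ N := by exact_mod_cast q.isLt
  constructor
  · linarith [hx.1, (by positivity : (0 : ℝ) ≤ (q : ℝ) / N)]
  · linarith [hx.2, (div_le_one hN).mpr hq]

lemma measurableSet_cellCores : MeasurableSet (cellCores N η) :=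
  MeasurableSet.iUnion fun _ => measurableSet_Icc

lemma volume_real_cellCores (hη : 0 < η) (hηN : 2 * η < (N : ℝ)⁻¹) :
    volume.real (cellCores N η) = 1 - 2 * N * η := by
  have hN := natCast_pos_of_two_mul_lt_inv hη hηN
  have hdisj : Pairwise (Disjoint on fun q : Fin N => cellCore N η q) := by
    intro q q' hqq'
    wlog hlt : q < q' generalizing q q'
    · exact (this hqq'.symm (lt_of_le_of_ne (not_lt.mp hlt) hqq'.symm)).symm
    have hle : ((q : ℕ) + 1 : ℝ) ≤ (q' : ℕ) := by exact_mod_cast hlt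
    refine Set.disjoint_left.mpr fun x hx hx' => ?_
    have := div_le_div_of_nonneg_right hle hN.le
    linarith [hx.2, hx'.1]
  have hcore : ∀ q : Fin N, volume.real (cellCore N η q) = (N : ℝ)⁻¹ - 2 * η := fun q => by
    rw [cellCore, Real.volume_real_Icc_of_le (by rw [← sub_nonneg]; ring_nf; linarith)]
    ring
  rw [cellCores, measureReal_iUnion_fintype hdisj (fun _ => measurableSet_Icc)
    fun _ => measure_Icc_lt_top.ne]
  simp only [hcore, sum_const, card_univ, Fintype.card_fin, nsmul_eq_mul]
  field_simp

end Measure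

section Error

variable {d m : ℕ} {α : ℝ}

lemma anorm_nonneg (α : ℝ) (M : Fin d → Fin m → ℝ) : 0 ≤ anorm α M := by
  unfold anorm
  positivity

lemma anorm_rpow (hα : 0 < α) (M : Fin d → Fin m → ℝ) :
    anorm α M ^ α = ∑ i, ∑ j, |M i j| ^ α := by
  rw [anorm, ← Real.rpow_mul (by positivity), one_div_mul_cancel hα.ne', Real.rpow_one]

lemma anorm_rpow_le (hα : 0 < α) {M : Fin d → Fin m → ℝ} {t : ℝ}
    (h : ∀ i j, |M i j| ≤ t) : anorm α M ^ α ≤ d * m * t ^ α := by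
  rw [anorm_rpow hα]
  calc ∑ i, ∑ j, |M i j| ^ α ≤ ∑ _i : Fin d, ∑ _j : Fin m, t ^ α :=
        sum_le_sum fun i _ => sum_le_sum fun j _ =>
          Real.rpow_le_rpow (abs_nonneg _) (h i j) hα.le
    _ = d * m * t ^ α := by simp [mul_assoc]

variable {L N : ℕ}

noncomputable def gridPoint (Q : CellMatrix d L N) : Fin (d + 1) → Fin (L + 1) → ℝ :=
  fun i k => (Q k i : ℕ) / N

noncomputable def gridValues (N : ℕ)
    (f : (Fin (d + 1) → Fin (L + 1) → ℝ) → Fin (d + 1) → Fin (L + 1) → ℝ) :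
    Fin (L + 1) × CellMatrix d L N → Fin (d + 1) → ℝ :=
  fun s i => f (gridPoint s.2) i s.1

lemma gridPoint_mem_cube (Q : CellMatrix d L N) : gridPoint Q ∈ cube (d + 1) (L + 1) :=
  fun i k => ⟨by unfold gridPoint; positivity,
    div_le_one_of_le₀ (by exact_mod_cast (Q k i).isLt.le) (Nat.cast_nonneg N)⟩

variable {C η : ℝ} {f : (Fin (d + 1) → Fin (L + 1) → ℝ) → Fin (d + 1) → Fin (L + 1) → ℝ}

lemma gridValues_mem_Icc (hmaps : ∀ X ∈ cube (d + 1) (L + 1), f X ∈ cube (d + 1) (L + 1))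
    (s : Fin (L + 1) × CellMatrix d L N) (i : Fin (d + 1)) : gridValues N f s i ∈ Set.Icc 0 1 :=
  hmaps _ (gridPoint_mem_cube s.2) i s.1

lemma anorm_approximant_sub_rpow_le (hα : 0 < α)
    (hmaps : ∀ X ∈ cube (d + 1) (L + 1), f X ∈ cube (d + 1) (L + 1))
    {X : Fin (d + 1) → Fin (L + 1) → ℝ} (hX : X ∈ cube (d + 1) (L + 1)) :
    anorm α (approximant d L N η (gridValues N f) X - f X) ^ α ≤ (d + 1) * (L + 1) := by
  have hbound := anorm_rpow_le hα (t := 1)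
    (M := approximant d L N η (gridValues N f) X - f X) fun i k => by
      have h₁ := approximant_mem_Icc η (gridValues N f) X i k
      have h₂ := hmaps X hX i k
      rw [Pi.sub_apply, Pi.sub_apply, abs_le]
      constructor <;> linarith [h₁.1, h₁.2, h₂.1, h₂.2]
  push_cast at hbound
  rwa [Real.one_rpow, mul_one] at hbound

/-- On the product of the cell cores the approximant is `f` at the grid point below `X`. -/
lemma anorm_approximant_sub_rpow_le_of_mem_cellCores (hα : 1 ≤ α) (hC : 0 ≤ C) (hη : 0 < η)
    (hηN : 2 * η < (N : ℝ)⁻¹)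
    (hmaps : ∀ X ∈ cube (d + 1) (L + 1), f X ∈ cube (d + 1) (L + 1))
    (hlip : ∀ X ∈ cube (d + 1) (L + 1), ∀ Y ∈ cube (d + 1) (L + 1),
      anorm α (f X - f Y) ≤ C * anorm α (X - Y))
    {X : Fin (d + 1) → Fin (L + 1) → ℝ} (hX : X ∈ cube (d + 1) (L + 1))
    (hcores : ∀ i k, X i k ∈ cellCores N η) :
    anorm α (approximant d L N η (gridValues N f) X - f X) ^ α ≤
      C ^ α * ((d + 1) * (L + 1)) / N := by
  have hα0 : 0 < α := by linarith
  have hN := natCast_pos_of_two_mul_lt_inv hη hηN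
  have hN1 : (N : ℝ)⁻¹ ≤ 1 := inv_le_one_of_one_le₀ (by exact_mod_cast Nat.cast_pos.mp hN)
  choose Q hQ using fun i k => Set.mem_iUnion.mp (hcores i k)
  rw [approximant_eq_of_mem_cellCore (Q := fun k i => Q i k) hη hηN (gridValues_mem_Icc hmaps) hQ]
  change anorm α (f (gridPoint fun k i => Q i k) - f X) ^ α ≤ _
  have hclose : ∀ i k, |(gridPoint (fun k i => Q i k) - X) i k| ≤ (N : ℝ)⁻¹ := by
    intro i k
    have := hQ i k
    simp only [cellCore, Set.mem_Icc] at this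
    simp only [Pi.sub_apply, gridPoint, abs_le]
    constructor <;> linarith [show ((Q i k : ℕ) + 1 : ℝ) / N = (Q i k : ℕ) / N + (N : ℝ)⁻¹ by
      ring]
  calc anorm α (f (gridPoint fun k i => Q i k) - f X) ^ α
      ≤ (C * anorm α (gridPoint (fun k i => Q i k) - X)) ^ α :=
        Real.rpow_le_rpow (anorm_nonneg _ _) (hlip _ (gridPoint_mem_cube _) X hX) hα0.le
    _ = C ^ α * anorm α (gridPoint (fun k i => Q i k) - X) ^ α :=
        Real.mul_rpow hC (anorm_nonneg _ _)
    _ ≤ C ^ α * (((d + 1 : ℕ) : ℝ) * (L + 1 : ℕ) * (N : ℝ)⁻¹ ^ α) := by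
        gcongr
        exact anorm_rpow_le hα0 hclose
    _ ≤ C ^ α * (((d + 1 : ℕ) : ℝ) * (L + 1 : ℕ) * (N : ℝ)⁻¹) := by
        gcongr
        exact Real.rpow_le_self_of_le_one (by positivity) hN1 hα
    _ = C ^ α * ((d + 1) * (L + 1)) / N := by push_cast; ring

lemma integral_anorm_approximant_sub_rpow_le (hα : 1 ≤ α) (hC : 0 ≤ C) (hη : 0 < η)
    (hηN : 2 * η < (N : ℝ)⁻¹)
    (hmaps : ∀ X ∈ cube (d + 1) (L + 1), f X ∈ cube (d + 1) (L + 1))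
    (hlip : ∀ X ∈ cube (d + 1) (L + 1), ∀ Y ∈ cube (d + 1) (L + 1),
      anorm α (f X - f Y) ≤ C * anorm α (X - Y)) :
    ∫ X in cube (d + 1) (L + 1), anorm α (approximant d L N η (gridValues N f) X - f X) ^ α ≤
      C ^ α * ((d + 1) * (L + 1)) / N + (d + 1) * (L + 1) * ((d + 1) * (L + 1) * (2 * N * η)) := by
  have hbad := volume_real_cube_sdiff_pi_le (d := d + 1) (m := L + 1)
    (measurableSet_cellCores (N := N) (η := η)) (cellCores_subset_Icc hη)
  rw [volume_real_cellCores hη hηN] at hbad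
  push_cast at hbad
  refine (setIntegral_le_add_mul_measureReal_sdiff measurableSet_cube
    (measurableSet_pi_pi measurableSet_cellCores) (by simp [volume_cube]) (by positivity)
    (by positivity)
    (fun X hX => anorm_approximant_sub_rpow_le_of_mem_cellCores hα hC hη hηN hmaps hlip hX.1
      fun i k => hX.2 i trivial k trivial)
    fun X hX => (anorm_approximant_sub_rpow_le (by linarith) hmaps hX).trans
      (le_add_of_nonneg_left (by positivity))).trans ?_
  rw [volume_real_cube, mul_one]
  gcongr
  linarith

lemma exists_grid_params {A B e : ℝ} (hA : 0 ≤ A) (hB : 0 < B) (he : 0 < e) :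
    ∃ (N : ℕ) (η : ℝ), 0 < η ∧ 2 * η < (N : ℝ)⁻¹ ∧ A / N + B * (B * (2 * N * η)) ≤ e := by
  obtain ⟨N, hN⟩ := exists_nat_gt (2 * A / e)
  have hN0 : (0 : ℝ) < N := (by positivity : (0 : ℝ) ≤ _).trans_lt hN
  set η : ℝ := min (1 / (4 * N)) (e / (4 * N * B ^ 2))
  refine ⟨N, η, lt_min (by positivity) (by positivity), ?_, ?_⟩
  · have : 2 * (1 / (4 * (N : ℝ))) < (N : ℝ)⁻¹ := by field_simp; norm_num
    linarith [min_le_left (1 / (4 * (N : ℝ))) (e / (4 * N * B ^ 2))]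
  · have hgrid : A / N ≤ e / 2 := by
      rw [div_lt_iff₀ he] at hN
      rw [div_le_iff₀ hN0]
      linarith
    have hcores : B * (B * (2 * N * η)) ≤ B * (B * (2 * N * (e / (4 * N * B ^ 2)))) := by
      gcongr
      exact min_le_right _ _
    have he2 : B * (B * (2 * N * (e / (4 * N * B ^ 2)))) = e / 2 := by
      field_simp
      ring
    linarith

end Error

end TransformerUniversality

open TransformerUniversality

/-- universality of transformers with one-layer, one-head, any-rank
self-attention.  For every `C`-Lipschitz `f : [0,1]^{d×L} → [0,1]^{d×L}` there exists a
transformer `τ ∈ 𝒯_A^{1,1,4}` on sequences of length `L` with `d_α(τ, f) ≤ ε`. -/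
theorem transformer_universality_TA (d L : ℕ) (hd : 1 ≤ d) (hL : 1 ≤ L)
    (α C ε : ℝ) (hα : 1 ≤ α) (hC : 0 < C) (hε : 0 < ε)
    (f : (Fin d → Fin L → ℝ) → Fin d → Fin L → ℝ)
    (hmaps : ∀ X ∈ cube d L, f X ∈ cube d L)
    (hlip : ∀ X ∈ cube d L, ∀ Y ∈ cube d L, anorm α (f X - f Y) ≤ C * anorm α (X - Y)) :
    ∃ τ : (Fin d → Fin L → ℝ) → Fin d → Fin L → ℝ,
      InTA τ ∧
      (∫ X in cube d L, anorm α (τ X - f X) ^ α) ^ (1 / α) ≤ ε := by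
  obtain ⟨d, rfl⟩ : ∃ d', d = d' + 1 := ⟨d - 1, by omega⟩
  obtain ⟨L, rfl⟩ : ∃ L', L = L' + 1 := ⟨L - 1, by omega⟩
  obtain ⟨N, η, hη, hηN, hsmall⟩ := exists_grid_params (A := C ^ α * ((d + 1) * (L + 1)))
    (B := (d + 1) * (L + 1)) (by positivity) (by positivity) (by positivity : 0 < ε ^ α)
  refine ⟨_, inTA_approximant η (gridValues N f), ?_⟩
  have hint := integral_anorm_approximant_sub_rpow_le hα hC.le hη hηN hmaps hlip
  calc (∫ X in cube (d + 1) (L + 1), anorm α (approximant d L N η (gridValues N f) X - f X) ^ α)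
        ^ (1 / α) ≤ (ε ^ α) ^ (1 / α) :=
        Real.rpow_le_rpow (setIntegral_nonneg measurableSet_cube fun X _ =>
          Real.rpow_nonneg (anorm_nonneg _ _) _) (hint.trans hsmall) (by positivity)
    _ = ε := by rw [← Real.rpow_mul hε.le, mul_one_div_cancel (by linarith), Real.rpow_one]
end
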